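/- arXiv:1405.5296 — 11 statements merged into one kernel-verified Lean document; each statement's English description precedes it below -/
import Mathlib

section
/- The function u(x,t) = (1 - 2tx - (1-4tx)^{1/2})/(2t^2) solves the inviscid Burgers equation ∂_t u = ∂_x(u^2/2) with initial condition u(x,0) = x^2, and its power series expansion is u(x,t) = Σ_{n≥0} ((2n+2)!/((n+1)!(n+2)!)) t^n x^{n+2}, whose coefficients are the Catalan numbers. -/
/-!
With `z = t x`, the Catalan generating function `G(z) = ∑ Cₙ zⁿ` converges for `|z| < 1/4`
(as `Cₙ ≤ 4ⁿ`) and satisfies `G = 1 + z G²`, so `(1 - 2 z G)² = 1 - 4 z`. The function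
`1 - 2 z G` is continuous, never zero and equal to `1` at `z = 0`, hence it is the positive root
`√(1 - 4z)`. Therefore `u = x² G(t x)² = ∑ C_{n+1} tⁿ x^{n+2}` for small `t x`, which gives the
expansion and, by continuity of `G` at `0`, the initial condition. Burgers' equation is checked
directly: writing `u = f(t x) / t²` with `f(y) = (1 - 2y - √(1 - 4y)) / 2` reduces it to the ODE
`y f' - 2 f = f f'`.
-/

open Filter Topology Metric Finset
open scoped Nat

theorem catalan_le_four_pow (n : ℕ) : catalan n ≤ 4 ^ n :=
  calc catalan n ≤ (n + 1) * catalan n := Nat.le_mul_of_pos_left _ n.succ_pos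
    _ = n.centralBinom := succ_mul_catalan_eq_centralBinom n
    _ ≤ 4 ^ n := Nat.centralBinom_le_four_pow n

theorem factorial_two_mul_add_two (n : ℕ) :
    (2 * n + 2)! = catalan (n + 1) * ((n + 1)! * (n + 2)!) := by
  have hchoose := Nat.choose_mul_factorial_mul_factorial (show n + 1 ≤ 2 * (n + 1) by omega)
  rw [show 2 * (n + 1) - (n + 1) = n + 1 by omega, ← Nat.centralBinom_eq_two_mul_choose,
    ← succ_mul_catalan_eq_centralBinom] at hchoose
  rw [show 2 * n + 2 = 2 * (n + 1) by ring, ← hchoose, Nat.factorial_succ (n + 1)]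
  ring

theorem factorial_div_factorial_mul_factorial_eq_catalan (K : Type*) [Field K] [CharZero K]
    (n : ℕ) : ((2 * n + 2)! : K) / ((n + 1)! * (n + 2)!) = catalan (n + 1) := by
  rw [factorial_two_mul_add_two]
  push_cast
  rw [mul_div_assoc, div_self, mul_one]
  exact_mod_cast (Nat.mul_pos (n + 1).factorial_pos (n + 2).factorial_pos).ne'

noncomputable def catalanGF {R : Type*} [Semiring R] [TopologicalSpace R] (z : R) : R :=
  ∑' n, (catalan n : R) * z ^ n

theorem catalanGF_zero {R : Type*} [Semiring R] [TopologicalSpace R] [T2Space R] :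
    catalanGF (0 : R) = 1 := by
  rw [catalanGF, tsum_eq_single 0 fun n hn => by simp [zero_pow hn]]
  simp

theorem catalan_succ_mul_pow {R : Type*} [Semiring R] (n : ℕ) (z : R) :
    (catalan (n + 1) : R) * z ^ n = ∑ ij ∈ antidiagonal n, (catalan ij.1 : R) * z ^ ij.1 * ((catalan ij.2 : R) * z ^ ij.2) := by
  rw [catalan_succ', Nat.cast_sum, Finset.sum_mul]
  refine Finset.sum_congr rfl fun ij hij => ?_
  rw [← HasAntidiagonal.mem_antidiagonal.1 hij, pow_add, Nat.cast_mul, mul_assoc, mul_assoc,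
    ← mul_assoc (z ^ ij.1), ← (Nat.cast_commute _ _).eq, mul_assoc]

section CatalanGF

variable {R : Type*} [NormedRing R] [NormOneClass R]

theorem norm_catalan_mul_pow_le (n : ℕ) (z : R) :
    ‖(catalan n : R) * z ^ n‖ ≤ (4 * ‖z‖) ^ n := by
  calc ‖(catalan n : R) * z ^ n‖ ≤ catalan n * ‖z‖ ^ n := by
        refine (norm_mul_le _ _).trans (mul_le_mul ?_ (norm_pow_le z n) (by positivity)
          (by positivity))
        simpa using Nat.norm_cast_le (α := R) (catalan n)
    _ ≤ 4 ^ n * ‖z‖ ^ n := by gcongr; exact_mod_cast catalan_le_four_pow n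
    _ = (4 * ‖z‖) ^ n := (mul_pow _ _ _).symm

theorem summable_norm_catalan_mul_pow {z : R} (hz : ‖z‖ < 1 / 4) :
    Summable fun n => ‖(catalan n : R) * z ^ n‖ :=
  .of_nonneg_of_le (fun _ => norm_nonneg _) (fun n => norm_catalan_mul_pow_le n z)
    (summable_geometric_of_lt_one (by positivity) (by linarith))

variable [CompleteSpace R]

theorem hasSum_catalan_succ_mul_pow {z : R} (hz : ‖z‖ < 1 / 4) :
    HasSum (fun n => (catalan (n + 1) : R) * z ^ n) (catalanGF z ^ 2) := by
  have h := summable_norm_catalan_mul_pow hz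
  simp_rw [catalan_succ_mul_pow]
  rw [sq, catalanGF, tsum_mul_tsum_eq_tsum_sum_antidiagonal_of_summable_norm h h]
  exact (summable_norm_sum_mul_antidiagonal_of_summable_norm h h).of_norm.hasSum

theorem catalanGF_eq_one_add_mul_sq {z : R} (hz : ‖z‖ < 1 / 4) :
    catalanGF z = 1 + z * catalanGF z ^ 2 := by
  have hshift := (summable_norm_catalan_mul_pow hz).of_norm.tsum_eq_zero_add
  have hterm (n : ℕ) :
      (catalan (n + 1) : R) * z ^ (n + 1) = z * ((catalan (n + 1) : R) * z ^ n) := by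
    rw [pow_succ', ← mul_assoc, ← mul_assoc, Nat.cast_comm]
  rw [← ((hasSum_catalan_succ_mul_pow hz).mul_left z).tsum_eq, ← tsum_congr hterm]
  simpa [catalanGF] using hshift

theorem continuousOn_catalanGF : ContinuousOn catalanGF (ball (0 : R) (1 / 4)) := by
  intro z hz
  obtain ⟨r, hzr, hr⟩ := exists_between (mem_ball_zero_iff.1 hz)
  have hr0 : 0 ≤ r := (norm_nonneg z).trans hzr.le
  have hcont : ContinuousOn catalanGF (closedBall (0 : R) r) :=
    continuousOn_tsum (fun n => (continuous_const.mul (continuous_pow n)).continuousOn)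
      (summable_geometric_of_lt_one (r := 4 * r) (by positivity) (by linarith)) fun n y hy =>
      (norm_catalan_mul_pow_le n y).trans (by gcongr; exact mem_closedBall_zero_iff.1 hy)
  exact (hcont.continuousAt (closedBall_mem_nhds_of_mem (mem_ball_zero_iff.2 hzr)))
    |>.continuousWithinAt

end CatalanGF

theorem one_sub_two_mul_mul_catalanGF_sq {R : Type*} [NormedCommRing R] [NormOneClass R]
    [CompleteSpace R] {z : R} (hz : ‖z‖ < 1 / 4) :
    (1 - 2 * z * catalanGF z) ^ 2 = 1 - 4 * z := by
  linear_combination (-4 * z) * catalanGF_eq_one_add_mul_sq hz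

theorem one_sub_two_mul_mul_catalanGF_pos {z : ℝ} (hz : |z| < 1 / 4) :
    0 < 1 - 2 * z * catalanGF z := by
  set F : ℝ → ℝ := fun y => 1 - 2 * y * catalanGF y
  -- `F y ^ 2 = 1 - 4 * y` does not vanish on the ball, so `F` keeps the sign of `F 0 = 1` there.
  have hne : ∀ y ∈ ball (0 : ℝ) (1 / 4), F y ≠ 0 := fun y hy hFy => by
    have hsq := one_sub_two_mul_mul_catalanGF_sq (mem_ball_zero_iff.1 hy)
    have hy' := abs_lt.1 (mem_ball_zero_iff.1 hy)
    simp only [F] at hFy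
    rw [hFy] at hsq
    linarith
  have hcont : ContinuousOn F (ball (0 : ℝ) (1 / 4)) :=
    continuousOn_const.sub ((continuousOn_const.mul continuousOn_id).mul continuousOn_catalanGF)
  by_contra! hle
  obtain ⟨c, hc, hFc⟩ := (convex_ball (0 : ℝ) (1 / 4)).isPreconnected.intermediate_value
    (mem_ball_zero_iff.2 hz) (mem_ball_self (by norm_num)) hcont
    ⟨hle, by simp [F, catalanGF_zero]⟩
  exact hne c hc hFc

theorem sqrt_one_sub_four_mul {z : ℝ} (hz : |z| < 1 / 4) :
    √(1 - 4 * z) = 1 - 2 * z * catalanGF z := by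
  rw [← one_sub_two_mul_mul_catalanGF_sq (by rwa [Real.norm_eq_abs]),
    Real.sqrt_sq (one_sub_two_mul_mul_catalanGF_pos hz).le]

noncomputable def quadraticSolution (x t : ℝ) : ℝ :=
  (1 - 2 * t * x - √(1 - 4 * t * x)) / (2 * t ^ 2)

theorem quadraticSolution_eq_sq_mul_catalanGF_sq {x t : ℝ} (ht : t ≠ 0) (h : |t * x| < 1 / 4) :
    quadraticSolution x t = x ^ 2 * catalanGF (t * x) ^ 2 := by
  have hG := catalanGF_eq_one_add_mul_sq (show ‖t * x‖ < 1 / 4 by rwa [Real.norm_eq_abs])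
  rw [quadraticSolution, mul_assoc 4, sqrt_one_sub_four_mul h]
  field_simp
  linear_combination 2 * t * x * hG

theorem deriv_similarity_solution_eq_deriv_flux {f : ℝ → ℝ} {f' x t : ℝ}
    (hf : HasDerivAt f f' (t * x)) (ht : t ≠ 0)
    (hode : t * x * f' - 2 * f (t * x) = f (t * x) * f') :
    deriv (fun t' => f (t' * x) / t' ^ 2) t = deriv (fun x' => (f (t * x') / t ^ 2) ^ 2 / 2) x := by
  have hft : HasDerivAt (fun t' => f (t' * x)) (f' * x) t := hf.comp t (hasDerivAt_mul_const x)
  have hfx : HasDerivAt (fun x' => f (t * x')) (f' * t) x :=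
    hf.comp x (by simpa using (hasDerivAt_id x).const_mul t)
  rw [(hft.fun_div (hasDerivAt_pow 2 t) (pow_ne_zero 2 ht)).deriv,
    (((hfx.div_const (t ^ 2)).fun_pow 2).div_const 2).deriv]
  generalize f (t * x) = c at *
  simp only [Nat.cast_ofNat, Nat.add_one_sub_one, pow_one]
  field_simp
  linear_combination hode

theorem deriv_quadraticSolution_eq_deriv_flux {x t : ℝ} (ht : t ≠ 0) (h : 4 * t * x < 1) :
    deriv (fun t' => quadraticSolution x t') t =
      deriv (fun x' => quadraticSolution x' t ^ 2 / 2) x := by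
  set f : ℝ → ℝ := fun y => (1 - 2 * y - √(1 - 4 * y)) / 2
  have hu (x t : ℝ) : quadraticSolution x t = f (t * x) / t ^ 2 := by
    simp only [quadraticSolution, f, mul_assoc]
    ring
  simp only [hu]
  have hpos : 0 < 1 - 4 * (t * x) := by linarith
  have hs := Real.sq_sqrt hpos.le
  have hs0 := (Real.sqrt_pos.2 hpos).ne'
  refine deriv_similarity_solution_eq_deriv_flux (f' := 1 / √(1 - 4 * (t * x)) - 1) ?_ ht ?_
  · have hinner : HasDerivAt (fun y => 1 - 4 * y) (-4) (t * x) := by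
      simpa using ((hasDerivAt_id (t * x)).const_mul 4).const_sub 1
    refine ((((hasDerivAt_id _).const_mul 2).const_sub 1).sub (hinner.sqrt hpos.ne')).div_const 2
      |>.congr_deriv ?_
    field_simp
    ring
  · simp only [f]
    generalize t * x = y at *
    generalize √(1 - 4 * y) = s at *
    field_simp
    linear_combination hs

theorem tendsto_quadraticSolution (x : ℝ) :
    Tendsto (fun t => quadraticSolution x t) (𝓝[≠] 0) (𝓝 (x ^ 2)) := by
  have hG0 : ContinuousAt (catalanGF : ℝ → ℝ) 0 :=
    continuousOn_catalanGF.continuousAt (isOpen_ball.mem_nhds (mem_ball_self (by norm_num)))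
  have hG : Tendsto (fun t => x ^ 2 * catalanGF (t * x) ^ 2) (𝓝 0) (𝓝 (x ^ 2)) := by
    simpa [catalanGF_zero] using
      (((hG0.comp_of_eq (continuous_mul_const x).continuousAt (zero_mul x)).pow 2).const_mul
        (x ^ 2)).tendsto
  have hsmall : ∀ᶠ t in 𝓝 (0 : ℝ), |t * x| < 1 / 4 := by
    refine (Continuous.tendsto (f := fun t => |t * x|) (by fun_prop) 0).eventually_lt_const ?_
    norm_num
  refine (hG.mono_left nhdsWithin_le_nhds).congr' ?_
  filter_upwards [nhdsWithin_le_nhds hsmall, self_mem_nhdsWithin] with t hsmall ht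
  exact (quadraticSolution_eq_sq_mul_catalanGF_sq ht hsmall).symm

/-- `u(x,t) = (1 - 2tx - √(1-4tx))/(2t²)` solves the inviscid Burgers equation
`∂ₜ u = ∂ₓ (u²/2)` with initial condition `u(x,0) = x²` (taken as a limit `t → 0`),
and its power series expansion is `u = Σ_{n≥0} ((2n+2)!/((n+1)!(n+2)!)) tⁿ x^{n+2}`,
whose coefficients are the Catalan numbers `C_{n+1}`. -/
theorem burgers_solution_quadratic :
    let u : ℝ → ℝ → ℝ := fun x t => (1 - 2 * t * x - Real.sqrt (1 - 4 * t * x)) / (2 * t ^ 2)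
    (∀ x t : ℝ, t ≠ 0 → 4 * t * x < 1 →
      deriv (fun t' => u x t') t = deriv (fun x' => (u x' t) ^ 2 / 2) x) ∧
    (∀ x : ℝ, Filter.Tendsto (fun t => u x t) (nhdsWithin 0 {t | t ≠ 0}) (nhds (x ^ 2))) ∧
    (∀ x t : ℝ, t ≠ 0 → |4 * t * x| < 1 →
      u x t = ∑' n : ℕ,
        ((Nat.factorial (2 * n + 2) : ℝ) /
          ((Nat.factorial (n + 1) : ℝ) * (Nat.factorial (n + 2) : ℝ))) * t ^ n * x ^ (n + 2)) ∧
    (∀ n : ℕ, ((Nat.factorial (2 * n + 2) : ℚ) /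
        ((Nat.factorial (n + 1) : ℚ) * (Nat.factorial (n + 2) : ℚ))) = catalan (n + 1)) := by
  intro u
  refine ⟨fun x t ht h => deriv_quadraticSolution_eq_deriv_flux ht h, tendsto_quadraticSolution,
    fun x t ht h => ?_, factorial_div_factorial_mul_factorial_eq_catalan ℚ⟩
  have hsmall : |t * x| < 1 / 4 := by
    rw [mul_assoc, abs_mul, abs_of_pos four_pos] at h
    linarith
  rw [show u x t = _ from quadraticSolution_eq_sq_mul_catalanGF_sq ht hsmall,
    ← (hasSum_catalan_succ_mul_pow (by rwa [Real.norm_eq_abs])).tsum_eq, ← tsum_mul_left]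
  refine tsum_congr fun n => ?_
  rw [factorial_div_factorial_mul_factorial_eq_catalan ℝ]
  ring
end

section
/- For every integer m ≥ 1 and constant c, the formal power series u(x,t) = x^m Σ_{k≥1} (c^k/((m-1)k+1)) · binom(mk,k) · (x^{m-1} t)^{k-1} satisfies the inviscid Burgers equation ∂_t u = ∂_x(u^2/2) with initial condition u(x,0) = c x^m. -/
/-!
The `t^j`-coefficient of `u` is `c^(j+1) A(j+1) x^(m+(m-1)j)` with `A` the Fuss–Catalan
numbers, and every term of the `t^j`-coefficient of `u²` has the same `x`-degree `2m+(m-1)j`.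
So the Burgers equation becomes `2(j+1) A(j+2) = (2m+(m-1)j) ∑_{i+k=j} A(i+1) A(k+1)`, a
rewriting of the convolution formula `((m-1)n+2) ∑_{i+k=n} A(i) A(k) = 2(mn+1) A(n)`. Writing
`A(k+1) = C(m(k+1),k+1) - (m-1) C(m(k+1),k)`, the convolution reduces to two instances of the
Rothe–Hagen identity `∑_{i+k=n} A(i) C(y+mk,k) = C(y+mn+1,n)`, which follows from Pascal's
rule by induction on `n` and `y`.
-/

open Finset PowerSeries

-- The parameter is `p = m - 1`, so that no truncated subtraction occurs.
noncomputable def fussCatalan (p k : ℕ) : ℚ := ((p + 1) * k).choose k / (p * k + 1)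

@[simp] lemma fussCatalan_zero (p : ℕ) : fussCatalan p 0 = 1 := by simp [fussCatalan]

@[simp] lemma fussCatalan_one (p : ℕ) : fussCatalan p 1 = 1 := by
  rw [fussCatalan, Nat.cast_one, mul_one, mul_one, Nat.choose_one_right]
  push_cast
  exact div_self (by positivity)

lemma fussCatalan_succ (p k : ℕ) :
    fussCatalan p (k + 1) =
      ((p + 1) * (k + 1)).choose (k + 1) - p * ((p + 1) * (k + 1)).choose k := by
  have h : (((p + 1) * (k + 1)).choose (k + 1) : ℚ) * (k + 1) =
      ((p + 1) * (k + 1)).choose k * (p * (k + 1) + 1) := by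
    have h := Nat.choose_succ_right_eq ((p + 1) * (k + 1)) k
    rw [show (p + 1) * (k + 1) - k = p * (k + 1) + 1 by rw [add_one_mul p (k + 1)]; omega] at h
    exact_mod_cast h
  rw [fussCatalan, div_eq_iff (by positivity)]
  push_cast
  linear_combination -(p : ℚ) * h

lemma choose_add_one_eq_mul_fussCatalan (p k : ℕ) :
    (((p + 1) * k + 1).choose k : ℚ) = ((p + 1) * k + 1) * fussCatalan p k := by
  have h := Nat.choose_mul_succ_eq ((p + 1) * k) k
  rw [show (p + 1) * k + 1 - k = p * k + 1 by rw [add_one_mul p k]; omega] at h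
  rw [fussCatalan, mul_div_assoc', eq_div_iff (by positivity),
    mul_comm _ (((p + 1) * k).choose k : ℚ)]
  exact_mod_cast h.symm

lemma Nat.choose_mul_add_one_add_one (p k : ℕ) :
    ((p + 1) * (k + 1)).choose (k + 1) = (p + 1) * (p + (p + 1) * k).choose k := by
  have h := Nat.add_one_mul_choose_eq (p + (p + 1) * k) k
  rw [show p + (p + 1) * k + 1 = (p + 1) * (k + 1) by ring] at h
  apply Nat.eq_of_mul_eq_mul_right (Nat.add_one_pos k)
  rw [← h]; ring

theorem sum_antidiagonal_fussCatalan_mul_choose (p y n : ℕ) :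
    ∑ x ∈ antidiagonal n, fussCatalan p x.1 * ((y + (p + 1) * x.2).choose x.2 : ℚ) =
      (y + (p + 1) * n + 1).choose n := by
  induction n generalizing y with
  | zero => simp
  | succ n ih =>
    rw [Nat.sum_antidiagonal_succ']
    induction y with
    | zero =>
      simp only [Nat.choose_zero_right, Nat.cast_one, mul_one, zero_add,
        Nat.choose_mul_add_one_add_one, Nat.cast_mul, mul_left_comm _ ((p + 1 : ℕ) : ℚ)]
      rw [← mul_sum, ih p, fussCatalan_succ, show p + (p + 1) * n + 1 = (p + 1) * (n + 1) by ring,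
        Nat.choose_succ_succ' _ n]
      push_cast; ring
    | succ y ihy =>
      have pascal (k : ℕ) : ((y + 1 + (p + 1) * (k + 1)).choose (k + 1) : ℚ) =
          (y + (p + 1) + (p + 1) * k).choose k + (y + (p + 1) * (k + 1)).choose (k + 1) := by
        rw [show y + 1 + (p + 1) * (k + 1) = y + (p + 1) * (k + 1) + 1 by ring,
          Nat.choose_succ_succ', show y + (p + 1) * (k + 1) = y + (p + 1) + (p + 1) * k by ring]
        push_cast; rfl
      rw [sum_congr rfl fun x _ => by rw [pascal, mul_add], sum_add_distrib, ih,
        show y + 1 + (p + 1) * (n + 1) + 1 = y + (p + 1) + (p + 1) * n + 1 + 1 by ring,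
        Nat.choose_succ_succ',
        show y + (p + 1) + (p + 1) * n + 1 = y + (p + 1) * (n + 1) + 1 by ring]
      simp only [Nat.choose_zero_right] at ihy ⊢
      push_cast
      linear_combination ihy

theorem fussCatalan_convolution (p n : ℕ) :
    (p * n + 2) * ∑ x ∈ antidiagonal n, fussCatalan p x.1 * fussCatalan p x.2 =
      2 * ((p + 1) * n + 1) * fussCatalan p n := by
  cases n with
  | zero => simp
  | succ n =>
    have rothe_zero := sum_antidiagonal_fussCatalan_mul_choose p 0 (n + 1)
    rw [Nat.sum_antidiagonal_succ'] at rothe_zero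
    simp only [zero_add, mul_zero, Nat.choose_zero_right, Nat.cast_one] at rothe_zero
    have rothe_succ : ∑ x ∈ antidiagonal n,
        fussCatalan p x.1 * (((p + 1) * (x.2 + 1)).choose x.2 : ℚ) =
          ((p + 1) * (n + 1) + 1).choose n := by
      convert sum_antidiagonal_fussCatalan_mul_choose p (p + 1) n using 5 <;> ring
    have choose_eq := choose_add_one_eq_mul_fussCatalan p (n + 1)
    have choose_ratio : (((p + 1) * (n + 1) + 1).choose (n + 1) : ℚ) * (n + 1) =
        ((p + 1) * (n + 1) + 1).choose n * (p * (n + 1) + 2) := by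
      have h := Nat.choose_succ_right_eq ((p + 1) * (n + 1) + 1) n
      rw [show (p + 1) * (n + 1) + 1 - n = p * (n + 1) + 2 by
        rw [add_one_mul p (n + 1)]; omega] at h
      exact_mod_cast h
    rw [Nat.sum_antidiagonal_succ', sum_congr rfl fun x _ => by rw [fussCatalan_succ, mul_sub,
      mul_left_comm], sum_sub_distrib, ← mul_sum, rothe_succ]
    push_cast at *
    rw [fussCatalan_zero]
    linear_combination
      (p * (n + 1) + 2 : ℚ) * rothe_zero + (p : ℚ) * choose_ratio + 2 * choose_eq

theorem fussCatalan_burgers (p j : ℕ) :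
    2 * (j + 1) * fussCatalan p (j + 2) =
      (2 * (p + 1) + p * j) *
        ∑ x ∈ antidiagonal j, fussCatalan p (x.1 + 1) * fussCatalan p (x.2 + 1) := by
  have h := fussCatalan_convolution p (j + 2)
  rw [Nat.sum_antidiagonal_succ, Nat.sum_antidiagonal_succ'] at h
  simp only [fussCatalan_zero, one_mul, mul_one, add_assoc, Nat.reduceAdd] at h
  push_cast at h
  linear_combination -h

namespace PowerSeries

variable {R : Type*} [CommSemiring R]

theorem smul_X_pow_eq_monomial (a : R) (n : ℕ) : a • (X : R⟦X⟧) ^ n = monomial n a := by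
  rw [X_pow_eq, ← map_smul, smul_eq_mul, mul_one]

theorem derivative_monomial_succ (a : R) (n : ℕ) :
    d⁄dX R (monomial (n + 1) a) = monomial n (a * (n + 1)) := by
  ext k
  rw [coeff_derivative, coeff_monomial, coeff_monomial]
  by_cases h : k = n <;> simp [h]

theorem coeff_mul_of_coeff_eq_monomial {u v : R⟦X⟧⟦X⟧} {e f p : ℕ} {a b : ℕ → R}
    (hu : ∀ j, coeff j u = monomial (e + p * j) (a j))
    (hv : ∀ j, coeff j v = monomial (f + p * j) (b j)) (n : ℕ) :
    coeff n (u * v) = monomial (e + f + p * n) (∑ x ∈ antidiagonal n, a x.1 * b x.2) := by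
  rw [coeff_mul, map_sum]
  refine sum_congr rfl fun x hx => ?_
  rw [hu, hv, monomial_mul_monomial, ← mem_antidiagonal.1 hx,
    show e + p * x.1 + (f + p * x.2) = e + f + p * (x.1 + x.2) by ring]

end PowerSeries

/-- For `m ≥ 1` and a constant `c`, the formal power series
`u(x,t) = x^m Σ_{k≥1} (c^k/((m-1)k+1)) binom(mk,k) (x^{m-1} t)^{k-1}`
(viewed as an element of `ℚ⟦x⟧⟦t⟧`, the `t`-coefficient of `t^{k-1}` being
`(c^k/((m-1)k+1)) binom(mk,k) x^{m+(m-1)(k-1)}`) satisfies the inviscid Burgers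
equation `∂ₜ u = ∂ₓ (u²/2)` with initial condition `u(x,0) = c x^m`. -/
theorem burgers_fussCatalan_solution (m : ℕ) (hm : 1 ≤ m) (c : ℚ) :
    let u : PowerSeries (PowerSeries ℚ) :=
      PowerSeries.mk fun j =>
        (c ^ (j + 1) / (((m : ℚ) - 1) * ((j : ℚ) + 1) + 1) *
          (Nat.choose (m * (j + 1)) (j + 1) : ℚ)) •
          ((PowerSeries.X : PowerSeries ℚ) ^ (m + (m - 1) * j))
    (∀ j : ℕ, PowerSeries.coeff (R := PowerSeries ℚ) j (PowerSeries.derivative (PowerSeries ℚ) u) =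
        PowerSeries.derivative ℚ
          (PowerSeries.coeff (R := PowerSeries ℚ) j (((1 : ℚ) / 2) • u ^ 2))) ∧
    PowerSeries.constantCoeff (R := PowerSeries ℚ) u = c • (PowerSeries.X : PowerSeries ℚ) ^ m := by
  intro u
  obtain ⟨p, rfl⟩ : ∃ p, m = p + 1 := ⟨m - 1, by omega⟩
  have hu (j : ℕ) : coeff j u = monomial (p + 1 + p * j) (c ^ (j + 1) * fussCatalan p (j + 1)) := by
    rw [coeff_mk, smul_X_pow_eq_monomial, add_tsub_cancel_right, fussCatalan]
    congr 1
    push_cast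
    ring
  refine ⟨fun j => ?_, ?_⟩
  · have hsum : ∑ x ∈ antidiagonal j,
        c ^ (x.1 + 1) * fussCatalan p (x.1 + 1) * (c ^ (x.2 + 1) * fussCatalan p (x.2 + 1)) =
          c ^ (j + 2) *
            ∑ x ∈ antidiagonal j, fussCatalan p (x.1 + 1) * fussCatalan p (x.2 + 1) := by
      rw [mul_sum]
      refine sum_congr rfl fun x hx => ?_
      rw [← mem_antidiagonal.1 hx]
      ring
    rw [coeff_derivative, hu, ← Nat.cast_add_one, ← map_natCast C, ← monomial_zero_eq_C_apply,
      monomial_mul_monomial, add_zero, coeff_smul, sq, coeff_mul_of_coeff_eq_monomial hu hu, hsum,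
      ← map_smul, show p + 1 + (p + 1) + p * j = p + 1 + p * (j + 1) + 1 by ring,
      derivative_monomial_succ]
    congr 1
    push_cast
    linear_combination (c ^ (j + 2) / 2) * fussCatalan_burgers p j
  · rw [← coeff_zero_eq_constantCoeff_apply, hu, smul_X_pow_eq_monomial]
    simp
end

section
/- For every integer n ≥ 2, the formal power series identity ( Σ_{k≥1} z^{k-1}/((n-1)k+1) · binom(nk,k) )^{1/n} = 1 + Σ_{k≥1} z^k/((n-1)k+1) · binom(nk,k) holds, where the n-th root is the unique formal power series with constant term 1. -/
/-!
For `r : ℕ` let `R r = Σ_k raney p r k X^k`, with `raney p r k = r / (r + p k) * C(r + p k, k)`.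
Pascal's rule gives `R (r + 1) = R r + X * R (r + p)` and `R 0 = 1`. For fixed `s`, the defect
`R (r + s) - R r * R s` satisfies the same recurrence in `r` and vanishes at `r = 0`, so it vanishes
coefficient by coefficient; hence `R r = R 1 ^ r`, and the recurrence at `r = 0` becomes the
functional equation `B = 1 + X B ^ p` for `B = R 1`. With `p = n` this says `B ^ n = A`, since `A`
is `B` with its constant term removed and divided by `X`. Uniqueness: `r ^ n - B ^ n` is `r - B`
times a series with constant term `n ≠ 0`.
-/

open PowerSeries

namespace PowerSeries

variable {R : Type*} [CommRing R]

theorem eq_zero_of_succ_eq_add_X_mul {p : ℕ} {T : ℕ → R⟦X⟧} (h0 : T 0 = 0)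
    (hsucc : ∀ r, T (r + 1) = T r + X * T (r + p)) (r : ℕ) : T r = 0 := by
  ext k
  rw [map_zero]
  induction k generalizing r with
  | zero =>
    induction r with
    | zero => simp [h0]
    | succ r ih => rw [hsucc, map_add, ih, coeff_zero_X_mul, add_zero]
  | succ k ihk =>
    induction r with
    | zero => simp [h0]
    | succ r ih => rw [hsucc, map_add, ih, coeff_succ_X_mul, ihk, add_zero]

theorem eq_pow_of_succ_eq_add_X_mul {p : ℕ} {F : ℕ → R⟦X⟧} (h0 : F 0 = 1)
    (hsucc : ∀ r, F (r + 1) = F r + X * F (r + p)) (r : ℕ) : F r = F 1 ^ r := by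
  have hmul (s : ℕ) : ∀ r, F (r + s) - F r * F s = 0 := by
    refine eq_zero_of_succ_eq_add_X_mul (p := p) (by simp [h0]) fun r => ?_
    rw [show r + 1 + s = r + s + 1 by ring, hsucc, hsucc, show r + s + p = r + p + s by ring]
    ring
  induction r with
  | zero => simp [h0]
  | succ r ih => rw [sub_eq_zero.mp (hmul 1 r), ih, pow_succ]

theorem eq_of_pow_eq_of_constantCoeff_eq_one [IsDomain R] {n : ℕ} (hn : (n : R) ≠ 0)
    {f g : R⟦X⟧} (hf : constantCoeff f = 1) (hg : constantCoeff g = 1) (h : f ^ n = g ^ n) :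
    f = g := by
  have hsum : constantCoeff (∑ i ∈ Finset.range n, f ^ i * g ^ (n - 1 - i)) = n := by
    simp [hf, hg]
  have hfactor := geom_sum₂_mul f g n
  rw [h, sub_self, mul_eq_zero] at hfactor
  refine sub_eq_zero.mp (hfactor.resolve_left fun h0 => hn ?_)
  rw [← hsum, h0, map_zero]

end PowerSeries

/-- The Raney numbers; the `if` only matters at `r = k = 0`, where the fraction reads `0 / 0`. -/
def raney (p r k : ℕ) : ℚ :=
  if k = 0 then 1 else r / (r + p * k : ℕ) * (r + p * k).choose k

theorem raney_zero (p r : ℕ) : raney p r 0 = 1 := if_pos rfl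

theorem raney_eq {p r k : ℕ} (h : r + p * k ≠ 0) :
    raney p r k = r / (r + p * k : ℕ) * (r + p * k).choose k := by
  rcases eq_or_ne k 0 with rfl | hk
  · simp_all [raney]
  · exact if_neg hk

theorem raney_succ_succ {p : ℕ} (hp : 0 < p) (r k : ℕ) :
    raney p (r + 1) (k + 1) = raney p r (k + 1) + raney p (r + p) k := by
  set M := r + p * (k + 1) with hM
  have hM0 : M ≠ 0 := by positivity
  rw [raney_eq (by omega), raney_eq hM0, raney_eq (by nlinarith),
    show r + 1 + p * (k + 1) = M + 1 by omega, show r + p + p * k = M by rw [hM]; ring, ← hM]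
  have hpascal : ((M + 1).choose (k + 1) : ℚ) = M.choose k + M.choose (k + 1) := by
    exact_mod_cast Nat.choose_succ_succ' M k
  have habsorb : ((M + 1 : ℕ) : ℚ) * M.choose k = (M + 1).choose (k + 1) * (k + 1) := by
    exact_mod_cast Nat.add_one_mul_choose_eq M k
  have hMq : (M : ℚ) = r + p * (k + 1) := by rw [hM]; push_cast; ring
  push_cast at habsorb ⊢
  have key : (r + 1 : ℚ) * M * (M + 1).choose (k + 1) =
      r * (M + 1) * M.choose (k + 1) + (r + p) * (M + 1) * M.choose k := by
    linear_combination r * (M + 1) * hpascal - p * habsorb + ((M + 1).choose (k + 1) : ℚ) * hMq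
  field_simp
  linear_combination key

theorem mk_raney_succ {p : ℕ} (hp : 0 < p) (r : ℕ) :
    mk (raney p (r + 1)) = mk (raney p r) + X * mk (raney p (r + p)) := by
  ext (_ | k)
  · simp [raney_zero]
  · simp [coeff_succ_X_mul, raney_succ_succ hp]

theorem mk_raney_zero (p : ℕ) : mk (raney p 0) = 1 := by
  ext (_ | k) <;> simp [raney]

theorem mk_raney_one_eq {p : ℕ} (hp : 0 < p) :
    mk (raney p 1) = 1 + X * mk (raney p 1) ^ p := by
  have hpow := eq_pow_of_succ_eq_add_X_mul (F := fun r => mk (raney p r)) (mk_raney_zero p)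
    (mk_raney_succ hp) p
  simpa [mk_raney_zero, hpow] using mk_raney_succ hp 0

theorem raney_one {p k : ℕ} (hp : 0 < p) (hk : k ≠ 0) :
    raney p 1 k = 1 / ((p - 1) * k + 1) * (p * k).choose k := by
  have hle : k ≤ p * k + 1 := Nat.le_succ_of_le (Nat.le_mul_of_pos_left k hp)
  have habsorb : ((p * k).choose k : ℚ) * (p * k + 1) = (p * k + 1).choose k * (p * k + 1 - k) := by
    exact_mod_cast Nat.choose_mul_succ_eq (p * k) k
  have hden : ((p : ℚ) - 1) * k + 1 ≠ 0 := by
    have : (1 : ℚ) ≤ p := by exact_mod_cast hp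
    nlinarith
  rw [raney, if_neg hk, add_comm 1]
  push_cast
  rw [div_mul_eq_mul_div, div_mul_eq_mul_div, div_eq_div_iff (by positivity) hden]
  linear_combination -habsorb

/-- For every integer `n ≥ 2`, with `A = Σ_{k≥1} z^{k-1}/((n-1)k+1) · binom(nk,k)` and
`B = 1 + Σ_{k≥1} z^k/((n-1)k+1) · binom(nk,k)`, the series `B` is the unique formal power
series with constant term `1` whose `n`-th power equals `A`; i.e. `A^{1/n} = B`. -/
theorem fussCatalan_root_identity (n : ℕ) (hn : 2 ≤ n) :
    let A : PowerSeries ℚ := PowerSeries.mk fun j =>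
      (1 / (((n : ℚ) - 1) * ((j : ℚ) + 1) + 1)) * (Nat.choose (n * (j + 1)) (j + 1) : ℚ)
    let B : PowerSeries ℚ := PowerSeries.mk fun k =>
      if k = 0 then 1 else (1 / (((n : ℚ) - 1) * (k : ℚ) + 1)) * (Nat.choose (n * k) k : ℚ)
    PowerSeries.constantCoeff B = 1 ∧ B ^ n = A ∧
      ∀ r : PowerSeries ℚ, PowerSeries.constantCoeff r = 1 → r ^ n = A → r = B := by
  intro A B
  have hn0 : 0 < n := by omega
  have hB : B = mk (raney n 1) := by
    ext k
    rcases eq_or_ne k 0 with rfl | hk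
    · simp [B, raney_zero]
    · simp [B, hk, raney_one hn0 hk]
  have hB0 : constantCoeff B = 1 := by simp [hB, raney_zero]
  have hA : A = mk fun j => coeff (j + 1) B := by
    ext j
    simp [A, B]
  have hBn : B ^ n = A := by
    apply X_mul_cancel
    rw [hA, ← sub_const_eq_X_mul_shift, hB0, map_one, eq_sub_iff_add_eq', hB]
    exact (mk_raney_one_eq hn0).symm
  refine ⟨hB0, hBn, fun r hr hrn => ?_⟩
  exact eq_of_pow_eq_of_constantCoeff_eq_one (by positivity) hr hB0 (hrn.trans hBn.symm)
end

section
/- Let f_n = ∂F_0/∂u_n(u_0,0,0,...) be determined by the recursion f_0 = u_0^2/2, f_1 = u_0 f_0, and f_n = u_0 f_{n-1} + (1/2) Σ_{k=0}^{n-2} f_k f_{n-k-2} for n ≥ 2. Then the generating function f(t) = Σ_{n≥0} f_n t^n satisfies f(t) = u_0^2/2 + u_0 t f(t) + (1/2) t^2 f(t)^2, and explicitly f_n = (2n+1)!!/(n+2)! · u_0^{n+2}. -/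
/-!
The power-series identity is the recursion read off coefficient by coefficient. The recursion
determines `f` from `u₀`, and it is homogeneous: if `g` solves it for `u₀ = 1`, then
`g n * u₀ ^ (n + 2)` solves it for `u₀`. For `u₀ = 1` the solution is
`C (n + 1) / 2 ^ (n + 1)` with `C` the Catalan numbers, by Segner's recurrence, and
`C (n + 1) * (n + 2)! = (2n + 1)‼ * 2 ^ (n + 1)` because `(n + 2) * C (n + 1)` is a central
binomial coefficient.
-/

open PowerSeries Finset Nat

theorem Nat.doubleFactorial_mul_two_pow_mul_factorial (n : ℕ) :
    (2 * n + 1)‼ * 2 ^ (n + 1) * (n + 1)! = (2 * n + 2)! := by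
  rw [mul_assoc, ← doubleFactorial_two_mul, mul_comm, show 2 * (n + 1) = 2 * n + 1 + 1 by ring,
    factorial_eq_mul_doubleFactorial]

theorem Nat.catalan_succ_mul_factorial (n : ℕ) :
    catalan (n + 1) * (n + 2)! = (2 * n + 1)‼ * 2 ^ (n + 1) := by
  refine Nat.eq_of_mul_eq_mul_right (factorial_pos (n + 1)) ?_
  calc catalan (n + 1) * (n + 2)! * (n + 1)! = (n + 1).centralBinom * (n + 1)! * (n + 1)! := by
        rw [← succ_mul_catalan_eq_centralBinom, factorial_succ (n + 1)]; ring
    _ = (2 * n + 2)! := by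
        rw [centralBinom_eq_two_mul_choose, show 2 * n + 2 = 2 * (n + 1) by ring,
          ← choose_mul_factorial_mul_factorial (by omega : n + 1 ≤ 2 * (n + 1)),
          show 2 * (n + 1) - (n + 1) = n + 1 by omega]
    _ = _ := (doubleFactorial_mul_two_pow_mul_factorial n).symm

theorem Nat.cast_catalan_succ_div_two_pow {K : Type*} [Field K] [CharZero K] (n : ℕ) :
    (catalan (n + 1) : K) / 2 ^ (n + 1) = (2 * n + 1)‼ / (n + 2)! := by
  rw [div_eq_div_iff (pow_ne_zero _ two_ne_zero) (cast_ne_zero.mpr (factorial_ne_zero _))]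
  exact_mod_cast catalan_succ_mul_factorial n

theorem Nat.catalan_add_three (n : ℕ) : catalan (n + 3) =
    2 * catalan (n + 2) + ∑ k ∈ range (n + 1), catalan (k + 1) * catalan (n - k + 1) := by
  rw [catalan_succ' (n + 2), Nat.sum_antidiagonal_eq_sum_range_succ_mk, sum_range_succ,
    sum_range_succ']
  have hmid : ∀ k ∈ range (n + 1),
      catalan (k + 1) * catalan (n + 2 - (k + 1)) = catalan (k + 1) * catalan (n - k + 1) := by
    intro k hk
    rw [show n + 2 - (k + 1) = n - k + 1 by grind]
  rw [sum_congr rfl hmid]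
  simp only [Nat.sub_zero, Nat.sub_self, catalan_zero]
  ring

section Airy

variable {K : Type*} [Field K]

structure IsAiryOnePoint (u : K) (f : ℕ → K) : Prop where
  zero : f 0 = u ^ 2 / 2
  one : f 1 = u * f 0
  add_two : ∀ n, f (n + 2) = u * f (n + 1) + 1 / 2 * ∑ k ∈ range (n + 1), f k * f (n - k)

namespace IsAiryOnePoint

variable {u : K} {f g : ℕ → K}

theorem unique (hf : IsAiryOnePoint u f) (hg : IsAiryOnePoint u g) : f = g := by
  funext n
  induction n using Nat.strong_induction_on with
  | _ n ih =>
    match n with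
    | 0 => rw [hf.zero, hg.zero]
    | 1 => rw [hf.one, hg.one, ih 0 (by omega)]
    | n + 2 =>
      rw [hf.add_two, hg.add_two, ih (n + 1) (by omega)]
      congr 2
      refine sum_congr rfl fun k hk => ?_
      rw [mem_range] at hk
      rw [ih k (by omega), ih (n - k) (by omega)]

theorem scale (hg : IsAiryOnePoint 1 g) (u : K) :
    IsAiryOnePoint u (fun n => g n * u ^ (n + 2)) where
  zero := by rw [hg.zero]; ring
  one := by rw [hg.one]; ring
  add_two n := by
    have hpow : ∀ k ∈ range (n + 1),
        g k * u ^ (k + 2) * (g (n - k) * u ^ (n - k + 2)) = g k * g (n - k) * u ^ (n + 4) := by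
      intro k hk
      rw [mem_range] at hk
      rw [show n + 4 = (k + 2) + (n - k + 2) by omega, pow_add]
      ring
    rw [sum_congr rfl hpow, ← sum_mul, hg.add_two]
    ring

theorem mk_eq (hf : IsAiryOnePoint u f) :
    PowerSeries.mk f = C (u ^ 2 / 2) + C u * X * PowerSeries.mk f
      + (1 / 2 : K) • (X ^ 2 * PowerSeries.mk f ^ 2) := by
  ext n
  rcases n with _ | _ | n
  · simp [hf.zero]
  · simp [hf.one, mul_assoc, coeff_X_pow_mul']
  · rw [coeff_mk, hf.add_two, map_add, map_add, coeff_C, if_neg (by omega), mul_assoc,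
      coeff_C_mul, coeff_succ_X_mul, coeff_mk, coeff_smul, coeff_X_pow_mul', if_pos (by omega),
      show n + 1 + 1 - 2 = n by omega, sq, coeff_mul,
      Nat.sum_antidiagonal_eq_sum_range_succ_mk]
    simp only [coeff_mk, smul_eq_mul]
    ring

end IsAiryOnePoint

theorem isAiryOnePoint_catalan [CharZero K] :
    IsAiryOnePoint (1 : K) (fun n => (catalan (n + 1) : K) / 2 ^ (n + 1)) where
  zero := by simp [catalan_one]
  one := by norm_num [catalan_one, catalan_two]
  add_two n := by
    have hpow : ∀ k ∈ range (n + 1),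
        (catalan (k + 1) : K) / 2 ^ (k + 1) * (catalan (n - k + 1) / 2 ^ (n - k + 1)) =
          (catalan (k + 1) * catalan (n - k + 1) : ℕ) / 2 ^ (n + 2) := by
      intro k hk
      rw [mem_range] at hk
      rw [show n + 2 = (k + 1) + (n - k + 1) by omega, pow_add]
      push_cast
      ring
    rw [sum_congr rfl hpow, ← sum_div, show n + 2 + 1 = n + 3 by ring, catalan_add_three]
    push_cast
    ring

end Airy

/-- Let `f n = ∂F₀/∂uₙ(u₀,0,0,...)` be determined by the recursion `f 0 = u₀²/2`,
`f 1 = u₀ f 0`, and `f n = u₀ f (n-1) + (1/2) Σ_{k=0}^{n-2} f k · f (n-k-2)` for `n ≥ 2`.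
Then the generating function `F(t) = Σ f n tⁿ` satisfies
`F = u₀²/2 + u₀ t F + (1/2) t² F²`, and explicitly `f n = (2n+1)‼/(n+2)! · u₀^{n+2}`. -/
theorem airy_genus_zero_one_point (u₀ : ℚ) (f : ℕ → ℚ)
    (h0 : f 0 = u₀ ^ 2 / 2) (h1 : f 1 = u₀ * f 0)
    (hrec : ∀ n : ℕ, f (n + 2) =
      u₀ * f (n + 1) + (1 / 2) * ∑ k ∈ Finset.range (n + 1), f k * f (n - k)) :
    (PowerSeries.mk f = PowerSeries.C (R := ℚ) (u₀ ^ 2 / 2)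
        + PowerSeries.C (R := ℚ) u₀ * PowerSeries.X * PowerSeries.mk f
        + ((1 : ℚ) / 2) • (PowerSeries.X ^ 2 * (PowerSeries.mk f) ^ 2)) ∧
    (∀ n : ℕ, f n = ((2 * n + 1)‼ : ℚ) / ((n + 2)! : ℚ) * u₀ ^ (n + 2)) := by
  have hf : IsAiryOnePoint u₀ f := ⟨h0, h1, hrec⟩
  refine ⟨hf.mk_eq, fun n => ?_⟩
  rw [hf.unique (isAiryOnePoint_catalan.scale u₀)]
  exact congrArg (· * u₀ ^ (n + 2)) (cast_catalan_succ_div_two_pow n)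
end

section
/- Let x = x(f) = f(1 - 2u_0/f^2)^{1/2} be the compositional inverse of f = x(1 + 2u_0/x^2)^{1/2} (as formal Laurent series). Then the coefficient of f^{-(2n+3)} in x equals -(2n+1)!!/(n+2)! · u_0^{n+2}. -/
/-!
Differentiating `S ^ 2 = 1 - a X ^ 2` and multiplying by `S` gives the linear ODE
`(1 - a X ^ 2) S' = -a X S`, i.e. the recurrence `(k + 3) c_{k+3} = a k c_{k+1}` on the
coefficients of `S`. With `c_2 = -a / 2` and `a = 2 u₀`, induction along the even coefficients
yields the double-factorial closed form.
-/

open PowerSeries Nat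

section
variable {R : Type*} [CommRing R]

theorem two_mul_mul_derivative_eq_of_sq_eq {S P : R⟦X⟧} (hS : S ^ 2 = P) :
    2 * P * d⁄dX R S = S * d⁄dX R P := by
  rw [← hS, Derivation.leibniz_pow]
  simp only [smul_eq_mul]
  push_cast
  ring

theorem derivative_one_sub_C_mul_X_sq (a : R) :
    d⁄dX R (1 - C a * X ^ 2) = -(C (2 * a) * X) := by
  rw [map_sub, Derivation.map_one_eq_zero, Derivation.leibniz, Derivation.leibniz_pow,
    derivative_C, derivative_X]
  simp only [smul_eq_mul, map_mul, map_ofNat]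
  ring

end

section
variable {K : Type*} [Field K] [CharZero K] {a : K} {S : K⟦X⟧}

theorem mul_derivative_eq_of_sq_eq_one_sub (hS : S ^ 2 = 1 - C a * X ^ 2) :
    (1 - C a * X ^ 2) * d⁄dX K S = -(C a * (X * S)) := by
  have h := two_mul_mul_derivative_eq_of_sq_eq hS
  rw [derivative_one_sub_C_mul_X_sq, map_mul, map_ofNat] at h
  have h2 : (2 : K⟦X⟧) * ((1 - C a * X ^ 2) * d⁄dX K S) = 2 * -(C a * (X * S)) := by
    linear_combination h
  have htwo : (2 : K⟦X⟧) ≠ 0 := fun h0 => by simpa [map_ofNat] using congrArg constantCoeff h0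
  exact mul_left_cancel₀ htwo h2

theorem coeff_two_of_sq_eq_one_sub (hS : S ^ 2 = 1 - C a * X ^ 2) :
    coeff 2 S = -(a / 2) * constantCoeff S := by
  have h := congrArg (coeff 1) (mul_derivative_eq_of_sq_eq_one_sub hS)
  rw [sub_mul, one_mul, map_sub, mul_assoc, coeff_C_mul, coeff_X_pow_mul', if_neg (by omega),
    map_neg, coeff_C_mul, coeff_succ_X_mul, coeff_derivative, coeff_zero_eq_constantCoeff] at h
  field_simp
  linear_combination h

theorem coeff_add_three_of_sq_eq_one_sub (hS : S ^ 2 = 1 - C a * X ^ 2) (k : ℕ) :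
    (k + 3) * coeff (k + 3) S = a * k * coeff (k + 1) S := by
  have h := congrArg (coeff (k + 2)) (mul_derivative_eq_of_sq_eq_one_sub hS)
  rw [sub_mul, one_mul, map_sub, mul_assoc, coeff_C_mul, coeff_X_pow_mul', if_pos (by omega),
    Nat.add_sub_cancel, map_neg, coeff_C_mul, coeff_succ_X_mul, coeff_derivative,
    coeff_derivative] at h
  push_cast at h
  linear_combination h

end

/-- Let `x = x(f) = f(1 - 2u₀/f²)^{1/2}` be the compositional inverse of
`f = x(1 + 2u₀/x²)^{1/2}`, i.e. `x = f·S(1/f)` where `S` is the unique formal power series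
with constant term `1` satisfying `S² = 1 - 2u₀X²` (so that `x² = f² - 2u₀`).  Then the
coefficient of `f^{-(2n+3)}` in `x`, i.e. the coefficient of `X^{2n+4}` in `S`, equals
`-(2n+1)‼/(n+2)! · u₀^{n+2}`. -/
theorem airy_miniversal_coefficients (u₀ : ℚ) (S : PowerSeries ℚ)
    (hS0 : PowerSeries.constantCoeff S = 1)
    (hS : S ^ 2 = 1 - PowerSeries.C (2 * u₀) * PowerSeries.X ^ 2) :
    ∀ n : ℕ, PowerSeries.coeff (2 * n + 4) S
      = -(((2 * n + 1)‼ : ℚ) / ((n + 2)! : ℚ)) * u₀ ^ (n + 2) := by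
  have hrec := coeff_add_three_of_sq_eq_one_sub hS
  intro n
  induction n with
  | zero =>
    have h := hrec 1
    rw [coeff_two_of_sq_eq_one_sub hS, hS0] at h
    norm_num [Nat.doubleFactorial] at h ⊢
    linear_combination h / 4
  | succ n ih =>
    have h := hrec (2 * n + 3)
    rw [show 2 * n + 3 + 1 = 2 * n + 4 by ring, ih,
      show 2 * n + 3 + 3 = 2 * (n + 1) + 4 by ring] at h
    rw [show 2 * (n + 1) + 1 = 2 * n + 1 + 2 by ring, Nat.doubleFactorial_add_two,
      show n + 1 + 2 = n + 2 + 1 by ring, Nat.factorial_succ]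
    push_cast at h ⊢
    field_simp at h ⊢
    linear_combination h / 2
end

section
/- There exists a unique sequence (w_n)_{n≥0} of formal power series in variables v_0, v_1, v_2, ... such that the series x = f - Σ_{n≥0} v_n f^{2n-1} - Σ_{n≥0} w_n f^{-2n-3} satisfies (x^2)_- = 0, i.e., all coefficients of negative powers of f in x^2 vanish. The w_n are determined recursively from w_0^{(2)} = v_0^2/2 by the system w_0 = v_0^2/2 + Σ_{j≥1} v_j w_{j-1}, w_1 = Σ_{j≥0} v_j w_j, and w_m = Σ_{j≥0} v_j w_{j+m-1} + (1/2) Σ_{j=0}^{m-2} w_j w_{m-2-j} for m ≥ 2. -/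
/-! The recursive system is exactly the vanishing of the coefficients of `f^{-2m-2}` in `x²`,
once the double sums over `ℕ × ℕ` are reindexed along the lines where their summands live.
In the system, the coefficient of `w n` at a monomial `d` is expressed through coefficients
of the `w j` at monomials of smaller total degree (the terms `vⱼ wₖ`) or at monomials of at
most the same degree with `j < n` (the terms `wⱼ wₖ`, `j, k ≤ n - 2`). Ordering the pairs
`(n, d)` lexicographically by `(deg d, n)`, the system is therefore a fixed-point equation
for an operator that is local with respect to a well-founded order, and has exactly one
solution. -/

open MvPowerSeries Finset

theorem WellFounded.existsUnique_isFixedPt {β γ : Type*} [Nonempty γ] {r : β → β → Prop}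
    (hr : WellFounded r) (Φ : (β → γ) → β → γ)
    (hΦ : ∀ F G b, (∀ c, r c b → F c = G c) → Φ F b = Φ G b) :
    ∃! F, Function.IsFixedPt Φ F := by
  classical
  let F := hr.fix fun b rec =>
    Φ (fun c => if h : r c b then rec c h else Classical.arbitrary γ) b
  have hF : Function.IsFixedPt Φ F := funext fun b => by
    rw [show F b = _ from hr.fix_eq _ b]
    exact hΦ _ _ b fun c hc => by rw [dif_pos hc]
  refine ⟨F, hF, fun G hG => funext fun b => ?_⟩
  induction b using hr.induction with
  | _ b ih =>
    calc G b = Φ G b := (congrFun hG b).symm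
      _ = Φ F b := hΦ G F b ih
      _ = F b := congrFun hF b

theorem Function.Injective.tsum_ite_eq {α β M : Type*} [AddCommMonoid M] [TopologicalSpace M]
    {g : α → β} (hg : Function.Injective g) {P : β → Prop} [DecidablePred P]
    (hP : ∀ b, P b ↔ b ∈ Set.range g) (f : β → M) :
    ∑' b, (if P b then f b else 0) = ∑' a, f (g a) := by
  rw [← hg.tsum_eq fun b hb => (hP b).1 (by_contra fun h => hb (if_neg h))]
  exact tsum_congr fun a => if_pos ((hP _).2 ⟨a, rfl⟩)

theorem Finsupp.degree_sub_single_lt {σ : Type*} {d : σ →₀ ℕ} {i : σ}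
    (hi : single i 1 ≤ d) :
    (d - single i 1).degree < d.degree := by
  conv_rhs => rw [← tsub_add_cancel_of_le hi]
  rw [map_add, degree_single]
  exact Nat.lt_succ_self _

namespace MvPowerSeries

variable {σ R : Type*} [Semiring R]

theorem coeff_X_mul (i : σ) (φ : MvPowerSeries σ R) (d : σ →₀ ℕ) :
    coeff d (X i * φ) =
      if Finsupp.single i 1 ≤ d then coeff (d - Finsupp.single i 1) φ else 0 := by
  rw [X, coeff_monomial_mul, one_mul]

theorem coeff_X_mul_congr {φ ψ : MvPowerSeries σ R} (i : σ) (d : σ →₀ ℕ)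
    (h : ∀ e : σ →₀ ℕ, e.degree < d.degree → coeff e φ = coeff e ψ) :
    coeff d (X i * φ) = coeff d (X i * ψ) := by
  rw [coeff_X_mul, coeff_X_mul]
  split_ifs with hi
  exacts [h _ (Finsupp.degree_sub_single_lt hi), rfl]

theorem coeff_mul_congr {φ φ' ψ ψ' : MvPowerSeries σ R} (d : σ →₀ ℕ)
    (hφ : ∀ e ≤ d, coeff e φ = coeff e φ') (hψ : ∀ e ≤ d, coeff e ψ = coeff e ψ') :
    coeff d (φ * ψ) = coeff d (φ' * ψ') := by
  classical
  rw [coeff_mul, coeff_mul]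
  refine sum_congr rfl fun p hp => ?_
  rw [HasAntidiagonal.mem_antidiagonal] at hp
  rw [hφ p.1 (hp ▸ le_self_add), hψ p.2 (hp ▸ le_add_self)]

theorem summable_coeff_X_mul [TopologicalSpace R] {ι : Type*} {f : ι → σ}
    (hf : Function.Injective f) (φ : ι → MvPowerSeries σ R) (d : σ →₀ ℕ) :
    Summable fun j => coeff d (X (f j) * φ j) := by
  refine summable_of_ne_finset_zero (s := d.support.preimage f hf.injOn) fun j hj => ?_
  rw [coeff_X_mul, if_neg]
  rw [Finset.mem_preimage, Finsupp.mem_support_iff, not_not] at hj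
  rw [Finsupp.single_le_iff, hj]
  exact Nat.not_succ_le_zero 0

end MvPowerSeries

noncomputable section

-- `xc`, `negCoeff` and the right-hand sides of `Sys` in `airy_special_deformation_unique`.
def airyXCoeff (a : ℕ) : MvPowerSeries ℕ ℂ :=
  (if a = 1 then 1 else 0) - X a

def airyNegCoeff (w : ℕ → MvPowerSeries ℕ ℂ) (m : ℕ) (d : ℕ →₀ ℕ) : ℂ :=
  (if m = 0 then coeff d ((X 0 : MvPowerSeries ℕ ℂ) ^ 2) else 0)
  - 2 * ∑' p : ℕ × ℕ, (if p.1 + m = p.2 + 1 then coeff d (airyXCoeff p.1 * w p.2) else 0)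
  + ∑' p : ℕ × ℕ, (if p.1 + p.2 + 2 = m then coeff d (w p.1 * w p.2) else 0)

def airySystemRhs (w : ℕ → MvPowerSeries ℕ ℂ) : ℕ → (ℕ →₀ ℕ) → ℂ
  | 0, d => coeff d (((1 : ℂ) / 2) • (X 0 : MvPowerSeries ℕ ℂ) ^ 2)
      + ∑' j : ℕ, coeff d (X (j + 1) * w j)
  | 1, d => ∑' j : ℕ, coeff d (X j * w j)
  | m + 2, d => (∑' j : ℕ, coeff d (X j * w (j + m + 1)))
      + (1 / 2) * ∑ j ∈ range (m + 1), coeff d (w j * w (m - j))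

end

theorem airySystemRhs_congr {w w' : ℕ → MvPowerSeries ℕ ℂ} {n : ℕ} {d : ℕ →₀ ℕ}
    (h : ∀ j e, toLex (e.degree, j) < toLex (d.degree, n) → coeff e (w j) = coeff e (w' j)) :
    airySystemRhs w n d = airySystemRhs w' n d := by
  have hX : ∀ i j, coeff d (X i * w j) = coeff d (X i * w' j) := fun i j =>
    coeff_X_mul_congr i d fun e he => h j e (Prod.Lex.toLex_lt_toLex.2 (Or.inl he))
  match n with
  | 0 => simp only [airySystemRhs, hX]
  | 1 => simp only [airySystemRhs, hX]
  | m + 2 =>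
    have hlt : ∀ j ≤ m, ∀ e ≤ d, coeff e (w j) = coeff e (w' j) := fun j hj e he =>
      h j e (Prod.Lex.toLex_lt_toLex'.2 ⟨Finsupp.degree_mono he, fun _ => by omega⟩)
    have hmul : ∀ j ∈ range (m + 1),
        coeff d (w j * w (m - j)) = coeff d (w' j * w' (m - j)) := fun j hj =>
      coeff_mul_congr d (hlt j (Nat.lt_succ_iff.1 (mem_range.1 hj))) (hlt _ (Nat.sub_le m j))
    simp only [airySystemRhs, hX, sum_congr rfl hmul]

theorem existsUnique_airySystem :
    ∃! w : ℕ → MvPowerSeries ℕ ℂ, ∀ n d, coeff d (w n) = airySystemRhs w n d := by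
  let key : ℕ × (ℕ →₀ ℕ) → ℕ ×ₗ ℕ := fun b => toLex (b.2.degree, b.1)
  have hfix := (InvImage.wf key wellFounded_lt).existsUnique_isFixedPt
    (fun F b => airySystemRhs (Equiv.curry _ _ _ F) b.1 b.2)
    fun F G b h => airySystemRhs_congr fun j e he => h (j, e) he
  refine (Equiv.curry ℕ (ℕ →₀ ℕ) ℂ).existsUnique_congr (fun F => ?_) |>.1 hfix
  exact ⟨fun h n d => (congrFun h (n, d)).symm, fun h => funext fun b => (h b.1 b.2).symm⟩

theorem coeff_airyXCoeff_mul (a : ℕ) (φ : MvPowerSeries ℕ ℂ) (d : ℕ →₀ ℕ) :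
    coeff d (airyXCoeff a * φ) = (if a = 1 then coeff d φ else 0) - coeff d (X a * φ) := by
  rw [airyXCoeff, sub_mul, map_sub]
  split_ifs <;> simp

theorem tsum_coeff_airyXCoeff_mul {g : ℕ → ℕ} (hg : Function.Injective g) {c : ℕ}
    (hc : g c = 1) (φ : ℕ → MvPowerSeries ℕ ℂ) (d : ℕ →₀ ℕ) :
    ∑' j, coeff d (airyXCoeff (g j) * φ j) =
      coeff d (φ c) - ∑' j, coeff d (X (g j) * φ j) := by
  have hδ : HasSum (fun j => if g j = 1 then coeff d (φ j) else 0) (coeff d (φ c)) := by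
    convert hasSum_single c fun j hj => if_neg fun (h : g j = 1) => hj (hg (h.trans hc.symm))
    rw [if_pos hc]
  simp_rw [coeff_airyXCoeff_mul]
  exact (hδ.sub (summable_coeff_X_mul hg φ d).hasSum).tsum_eq

theorem airyNegCoeff_linear_zero (w : ℕ → MvPowerSeries ℕ ℂ) (d : ℕ →₀ ℕ) :
    ∑' p : ℕ × ℕ, (if p.1 + 0 = p.2 + 1 then coeff d (airyXCoeff p.1 * w p.2) else 0) =
      coeff d (w 0) - ∑' j, coeff d (X (j + 1) * w j) := by
  have hg : Function.Injective fun b : ℕ => (b + 1, b) := fun a b h => (Prod.ext_iff.1 h).2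
  rw [hg.tsum_ite_eq fun p => ⟨fun h => ⟨p.2, Prod.ext (by dsimp only; omega) rfl⟩,
    by rintro ⟨b, rfl⟩; rfl⟩]
  exact tsum_coeff_airyXCoeff_mul (add_left_injective 1) rfl w d

theorem airyNegCoeff_linear_succ (w : ℕ → MvPowerSeries ℕ ℂ) (k : ℕ)
    (d : ℕ →₀ ℕ) :
    ∑' p : ℕ × ℕ,
        (if p.1 + (k + 1) = p.2 + 1 then coeff d (airyXCoeff p.1 * w p.2) else 0) =
      coeff d (w (k + 1)) - ∑' j, coeff d (X j * w (j + k)) := by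
  have hg : Function.Injective fun a : ℕ => (a, a + k) := fun a b h => (Prod.ext_iff.1 h).1
  rw [hg.tsum_ite_eq fun p => ⟨fun h => ⟨p.1, Prod.ext rfl (by dsimp only; omega)⟩,
    by rintro ⟨a, rfl⟩; simp only; omega⟩, add_comm k]
  exact tsum_coeff_airyXCoeff_mul Function.injective_id rfl (fun j => w (j + k)) d

theorem airyNegCoeff_quadratic (w : ℕ → MvPowerSeries ℕ ℂ) (k : ℕ) (d : ℕ →₀ ℕ) :
    ∑' p : ℕ × ℕ, (if p.1 + p.2 + 2 = k + 2 then coeff d (w p.1 * w p.2) else 0) =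
      ∑ j ∈ range (k + 1), coeff d (w j * w (k - j)) := by
  rw [← Finset.Nat.sum_antidiagonal_eq_sum_range_succ_mk (fun p => coeff d (w p.1 * w p.2)),
    tsum_eq_sum (s := antidiagonal k)]
  · refine sum_congr rfl fun p hp => if_pos ?_
    rw [HasAntidiagonal.mem_antidiagonal] at hp
    omega
  · intro p hp
    rw [HasAntidiagonal.mem_antidiagonal] at hp
    exact if_neg (by omega)

theorem airyNegCoeff_eq (w : ℕ → MvPowerSeries ℕ ℂ) (m : ℕ) (d : ℕ →₀ ℕ) :
    airyNegCoeff w m d = -2 * (coeff d (w m) - airySystemRhs w m d) := by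
  match m with
  | 0 =>
    rw [airyNegCoeff, airyNegCoeff_linear_zero, tsum_congr fun p => if_neg (by omega),
      tsum_zero]
    simp only [airySystemRhs, map_smul, smul_eq_mul, ↓reduceIte]
    ring
  | 1 =>
    rw [airyNegCoeff, airyNegCoeff_linear_succ, tsum_congr fun p => if_neg (by omega),
      tsum_zero]
    simp only [airySystemRhs, add_zero, one_ne_zero, ↓reduceIte]
    ring
  | m + 2 =>
    rw [airyNegCoeff, airyNegCoeff_linear_succ, airyNegCoeff_quadratic]
    simp only [airySystemRhs, ← add_assoc, if_neg (by omega : m + 2 ≠ 0)]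
    ring

/-- There exists a unique sequence `(wₙ)` of formal power series in `v₀, v₁, ...` such that
`x = f - Σ_{n≥0} vₙ f^{2n-1} - Σ_{n≥0} wₙ f^{-2n-3}` satisfies `(x²)₋ = 0`, i.e. every
coefficient of a negative power `f^{-2m-2}` of `f` in `x²` vanishes.  Moreover this
condition is equivalent to the recursive system
`w₀ = v₀²/2 + Σ_{j≥1} vⱼ w_{j-1}`, `w₁ = Σ_{j≥0} vⱼ wⱼ`,
`wₘ = Σ_{j≥0} vⱼ w_{j+m-1} + (1/2) Σ_{j=0}^{m-2} wⱼ w_{m-2-j}` for `m ≥ 2`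
(which determines the `wₙ` recursively from `w₀⁽²⁾ = v₀²/2`). -/
theorem airy_special_deformation_unique :
    -- coefficient of `f^{2a-1}` in `x` is `δ_{a,1} - v_a`
    let xc : ℕ → MvPowerSeries ℕ ℂ := fun a =>
      (if a = 1 then 1 else 0) - MvPowerSeries.X a
    -- coefficient of `f^{-2m-2}` in `x²`, evaluated on the monomial `d`
    let negCoeff : (ℕ → MvPowerSeries ℕ ℂ) → ℕ → (ℕ →₀ ℕ) → ℂ := fun w m d =>
      (if m = 0 then
          MvPowerSeries.coeff d ((MvPowerSeries.X 0 : MvPowerSeries ℕ ℂ) ^ 2)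
        else 0)
      - 2 * ∑' p : ℕ × ℕ,
          (if p.1 + m = p.2 + 1 then MvPowerSeries.coeff d (xc p.1 * w p.2) else 0)
      + ∑' p : ℕ × ℕ,
          (if p.1 + p.2 + 2 = m then MvPowerSeries.coeff d (w p.1 * w p.2) else 0)
    let Sys : (ℕ → MvPowerSeries ℕ ℂ) → Prop := fun w =>
      (∀ d : ℕ →₀ ℕ, MvPowerSeries.coeff d (w 0) =
          MvPowerSeries.coeff d
            (((1 : ℂ) / 2) • (MvPowerSeries.X 0 : MvPowerSeries ℕ ℂ) ^ 2)
          + ∑' j : ℕ, MvPowerSeries.coeff d (MvPowerSeries.X (j + 1) * w j)) ∧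
      (∀ d : ℕ →₀ ℕ, MvPowerSeries.coeff d (w 1) =
          ∑' j : ℕ, MvPowerSeries.coeff d (MvPowerSeries.X j * w j)) ∧
      (∀ m : ℕ, ∀ d : ℕ →₀ ℕ, MvPowerSeries.coeff d (w (m + 2)) =
          (∑' j : ℕ, MvPowerSeries.coeff d (MvPowerSeries.X j * w (j + m + 1)))
          + (1 / 2) * ∑ j ∈ Finset.range (m + 1),
              MvPowerSeries.coeff d (w j * w (m - j)))
    (∃! w : ℕ → MvPowerSeries ℕ ℂ, ∀ m d, negCoeff w m d = 0) ∧
    (∀ w : ℕ → MvPowerSeries ℕ ℂ, (∀ m d, negCoeff w m d = 0) ↔ Sys w) := by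
  intro xc negCoeff Sys
  have hSys : ∀ w, Sys w ↔ ∀ n d, coeff d (w n) = airySystemRhs w n d := fun w =>
    ⟨fun ⟨h0, h1, h2⟩ n => match n with
      | 0 => h0
      | 1 => h1
      | m + 2 => h2 m,
    fun h => ⟨h 0, h 1, fun m => h (m + 2)⟩⟩
  have hneg : ∀ w,
      (∀ m d, negCoeff w m d = 0) ↔ ∀ n d, coeff d (w n) = airySystemRhs w n d :=
    fun w => forall₂_congr fun m d => by
      rw [show negCoeff w m d = airyNegCoeff w m d from rfl, airyNegCoeff_eq]
      simp [sub_eq_zero]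
  refine ⟨?_, fun w => (hneg w).trans (hSys w).symm⟩
  simpa only [hneg] using existsUnique_airySystem
end

section
/- With σ_n(φ_0) as above, σ_1(φ_0) · (2n-1)!! σ_n(φ_0) = (2n+1)!! σ_{n+1}(φ_0) - u_0 · (2n-1)!! σ_n(φ_0) + ((2n-1)!!/(n+1)!) u_0^{n+1} for all n ≥ 0. -/
/-!
Write `σₙ = ∑_{j+k=n} yʲ uᵏ / ((2j-1)‼ k!)` with `y = x²`. On a monomial of `σₙ₊₁` the weight
`2n+1` splits as `(2j-1) + 2k`. Since `(2j-1)/(2j-1)‼ = 1/(2j-3)‼` and `2k/k! = 2/(k-1)!`, the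
two parts give `y σₙ` and `2u σₙ`, except at `j = 0`, where the weight `-1` leaves
`-u^(n+1)/(n+1)!`. So `(2n+1) σₙ₊₁ = (y + 2u) σₙ - u^(n+1)/(n+1)!`, and the claim follows by
multiplying with `(2n-1)‼` and using `σ₁ = y + u`.
-/

open Polynomial Nat Finset

namespace DescendantSigma

variable {R : Type*} [CommRing R] [Algebra ℚ R] (y u : R)

noncomputable def term (j k : ℕ) : R :=
  (((2 * j - 1)‼ : ℚ) * (k ! : ℚ))⁻¹ • (y ^ j * u ^ k)

noncomputable def sigma (n : ℕ) : R :=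
  ∑ p ∈ antidiagonal n, term y u p.1 p.2

lemma smul_term_succ_left (j k : ℕ) :
    (2 * ((j + 1 : ℕ) : ℚ) - 1) • term y u (j + 1) k = y * term y u j k := by
  have hcoef : (2 * ((j + 1 : ℕ) : ℚ) - 1) * (((2 * (j + 1) - 1)‼ : ℚ) * (k ! : ℚ))⁻¹ =
      (((2 * j - 1)‼ : ℚ) * (k ! : ℚ))⁻¹ := by
    rw [show 2 * (j + 1) - 1 = 2 * j + 1 by omega, doubleFactorial_add_one]
    push_cast
    field_simp
    ring
  rw [term, term, smul_smul, hcoef]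
  simp only [Algebra.smul_def]
  ring

lemma smul_term_succ_right (j k : ℕ) :
    (2 * ((k + 1 : ℕ) : ℚ)) • term y u j (k + 1) = 2 * u * term y u j k := by
  have hcoef : (2 * ((k + 1 : ℕ) : ℚ)) * (((2 * j - 1)‼ : ℚ) * ((k + 1)! : ℚ))⁻¹ =
      2 * (((2 * j - 1)‼ : ℚ) * (k ! : ℚ))⁻¹ := by
    push_cast [factorial_succ]
    field_simp
  rw [term, term, smul_smul, hcoef]
  simp only [Algebra.smul_def, map_mul, map_ofNat]
  ring

theorem smul_sigma_succ (n : ℕ) :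
    (2 * (n : ℚ) + 1) • sigma y u (n + 1) =
      (y + 2 * u) * sigma y u n - ((n + 1)! : ℚ)⁻¹ • u ^ (n + 1) := by
  have hweight : ∀ p ∈ antidiagonal (n + 1),
      (2 * (n : ℚ) + 1) • term y u p.1 p.2 =
        (2 * (p.1 : ℚ) - 1) • term y u p.1 p.2 + (2 * (p.2 : ℚ)) • term y u p.1 p.2 := by
    intro p hp
    have hsum : (p.1 : ℚ) + p.2 = n + 1 := by exact_mod_cast mem_antidiagonal.mp hp
    rw [← add_smul]
    congr 1
    linarith
  have hleft : ∑ p ∈ antidiagonal (n + 1), (2 * (p.1 : ℚ) - 1) • term y u p.1 p.2 =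
      y * sigma y u n - ((n + 1)! : ℚ)⁻¹ • u ^ (n + 1) := by
    have hzero : (2 * ((0 : ℕ) : ℚ) - 1) • term y u 0 (n + 1) =
        -(((n + 1)! : ℚ)⁻¹ • u ^ (n + 1)) := by
      -- `(2 * 0 - 1)‼ = 0‼ = 1`: truncated subtraction realises the convention `(-1)‼ = 1`.
      simp [term]
    rw [Nat.sum_antidiagonal_succ, hzero, sigma, mul_sum]
    simp only [smul_term_succ_left]
    abel
  have hright : ∑ p ∈ antidiagonal (n + 1), (2 * (p.2 : ℚ)) • term y u p.1 p.2 =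
      2 * u * sigma y u n := by
    rw [Nat.sum_antidiagonal_succ', sigma, mul_sum]
    simp only [smul_term_succ_right, CharP.cast_eq_zero, mul_zero, zero_smul, zero_add]
  rw [sigma, smul_sum, sum_congr rfl hweight, sum_add_distrib, hleft, hright]
  ring

lemma sigma_eq_sum_range (n : ℕ) :
    sigma y u n = ∑ j ∈ range (n + 1),
      ((1 : ℚ) / (((2 * j - 1)‼ : ℚ) * ((n - j)! : ℚ))) • (y ^ j * u ^ (n - j)) := by
  rw [sigma, Nat.sum_antidiagonal_eq_sum_range_succ (term y u)]
  simp only [term, one_div]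

lemma sigma_one : sigma y u 1 = y + u := by
  rw [sigma, Nat.sum_antidiagonal_succ, add_comm]
  simp [term]

end DescendantSigma

open DescendantSigma in
/-- With `σₙ(φ₀) = Σ_{j=0}^n x^{2j} u₀^{n-j}/((2j-1)‼ (n-j)!)` (in `ℚ[x][u₀]`, `u₀` the
outer variable, so `σ₁(φ₀) = x² + u₀`), for all `n ≥ 0`:
`σ₁(φ₀) · (2n-1)‼ σₙ(φ₀) = (2n+1)‼ σ_{n+1}(φ₀) - u₀ · (2n-1)‼ σₙ(φ₀)
  + ((2n-1)‼/(n+1)!) u₀^{n+1}`. -/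
theorem descendant_sigma1_recursion :
    let A := Polynomial (Polynomial ℚ)
    let u₀ : A := Polynomial.X
    let σ : ℕ → A := fun n =>
      ∑ j ∈ Finset.range (n + 1),
        ((1 : ℚ) / (((2 * j - 1)‼ : ℚ) * ((n - j)! : ℚ))) •
          (Polynomial.C (Polynomial.X ^ (2 * j)) * Polynomial.X ^ (n - j))
    ∀ n : ℕ,
      σ 1 * (((2 * n - 1)‼ : ℚ) • σ n) =
        ((2 * n + 1)‼ : ℚ) • σ (n + 1) - u₀ * (((2 * n - 1)‼ : ℚ) • σ n)
          + (((2 * n - 1)‼ : ℚ) / ((n + 1)! : ℚ)) • u₀ ^ (n + 1) := by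
  intro A u₀ σ n
  have hσ : ∀ m, σ m = sigma (C (X ^ 2)) u₀ m := fun m => by
    simp only [σ, u₀, sigma_eq_sum_range, ← C_pow, ← pow_mul]
  have hdf : ((2 * n + 1)‼ : ℚ) = (2 * n - 1)‼ * (2 * n + 1) := by
    rw [doubleFactorial_add_one, mul_comm]
    push_cast
    rfl
  rw [hσ, hσ, hσ, sigma_one, hdf, mul_smul, smul_sigma_succ]
  simp only [Algebra.smul_def, div_eq_mul_inv, map_mul]
  ring
end

section
/- Let f_n(x) = Σ_{j=0}^n ((2n-1)!!/((2j-1)!!(n-j)!)) x^{2j}. Then for all k ≥ j ≥ 1: f_j f_k = f_{j+k} - Σ_{l=1}^j ((2l-3)!!/l!) f_{j+k-l} + Σ_{l=1}^j ((2(k+l)-3)!!/(k+l)!) f_{j-l}. -/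
/-!
With `c l = (2l-3)‼/l!` the polynomials satisfy `f (n+1) = (x² + 2) f n - c (n+1)`; comparing
coefficients of `x^{2j}` reduces this to `2n+1 = (2j+1) + 2(n-j)`. Given `f 0 = 1` and any
recurrence `f (n+1) = u f n - c (n+1)` in a commutative ring, the product formula follows by
induction on `j`: multiplying the formula for `j` by `u` shifts every `f` up by one, and the
constants produced along the way cancel in pairs under the reflection `l ↦ j+1-l`.
-/

open Finset Polynomial Nat

theorem sum_Icc_one_reflect {M : Type*} [AddCommMonoid M] (g : ℕ → M) (n : ℕ) :
    ∑ l ∈ Icc 1 n, g (n + 1 - l) = ∑ l ∈ Icc 1 n, g l := by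
  refine sum_nbij' (fun l => n + 1 - l) (fun l => n + 1 - l) ?_ ?_ ?_ ?_ ?_ <;>
    intro l hl <;> simp only [mem_Icc] at hl ⊢ <;> omega

theorem mul_eq_of_succ_eq_mul_sub {R : Type*} [CommRing R] {f c : ℕ → R} {u : R}
    (h0 : f 0 = 1) (hrec : ∀ n, f (n + 1) = u * f n - c (n + 1)) (j k : ℕ) :
    f j * f k = f (j + k) - ∑ l ∈ Icc 1 j, c l * f (j + k - l)
      + ∑ l ∈ Icc 1 j, c (k + l) * f (j - l) := by
  have hmul : ∀ n, u * f n = f (n + 1) + c (n + 1) := fun n => by rw [hrec]; ring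
  induction j with
  | zero => simp [h0]
  | succ j ih =>
    have hshiftSub : u * ∑ l ∈ Icc 1 j, c l * f (j + k - l)
        = ∑ l ∈ Icc 1 j, c l * f (j + k + 1 - l) + ∑ l ∈ Icc 1 j, c l * c (j + k + 1 - l) := by
      rw [mul_sum, ← sum_add_distrib]
      refine sum_congr rfl fun l hl => ?_
      have hl : j + k - l + 1 = j + k + 1 - l := by simp only [mem_Icc] at hl; omega
      rw [mul_left_comm, hmul, hl, mul_add]
    have hshiftAdd : u * ∑ l ∈ Icc 1 j, c (k + l) * f (j - l)
        = ∑ l ∈ Icc 1 j, c (k + l) * f (j + 1 - l)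
          + ∑ l ∈ Icc 1 j, c (k + l) * c (j + 1 - l) := by
      rw [mul_sum, ← sum_add_distrib]
      refine sum_congr rfl fun l hl => ?_
      have hl : j - l + 1 = j + 1 - l := by simp only [mem_Icc] at hl; omega
      rw [mul_left_comm, hmul, hl, mul_add]
    have hconst : ∑ l ∈ Icc 1 j, c (k + l) * c (j + 1 - l)
        = ∑ l ∈ Icc 1 j, c l * c (j + k + 1 - l) := by
      rw [← sum_Icc_one_reflect (fun l => c (k + l) * c (j + 1 - l))]
      refine sum_congr rfl fun l hl => ?_
      simp only [mem_Icc] at hl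
      rw [show k + (j + 1 - l) = j + k + 1 - l by omega, show j + 1 - (j + 1 - l) = l by omega,
        mul_comm]
    calc f (j + 1) * f k = u * (f j * f k) - c (j + 1) * f k := by rw [hrec]; ring
      _ = _ := by
        rw [ih, mul_add, mul_sub, hmul, hshiftSub, hshiftAdd, hconst, sum_Icc_succ_top (by omega),
          sum_Icc_succ_top (by omega), Nat.sub_self, h0,
          show j + 1 + k = j + k + 1 by omega, show j + k + 1 - (j + 1) = k by omega,
          show k + (j + 1) = j + k + 1 by omega]
        ring

theorem doubleFactorial_two_mul_succ_sub_one (n : ℕ) :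
    (2 * (n + 1) - 1)‼ = (2 * n + 1) * (2 * n - 1)‼ := by
  rw [show 2 * (n + 1) - 1 = 2 * n + 1 by omega, doubleFactorial_add_one]

noncomputable def descendantCoeff (n j : ℕ) : ℚ :=
  ((2 * n - 1)‼ : ℚ) / (((2 * j - 1)‼ : ℚ) * ((n - j)! : ℚ))

/-- Truncated subtraction gives `(2 * 1 - 3)‼ = 0‼ = 1`, the convention `(-1)‼ = 1`. -/
noncomputable def descendantConst (l : ℕ) : ℚ := ((2 * l - 3)‼ : ℚ) / (l ! : ℚ)

noncomputable def descendantPoly (n : ℕ) : ℚ[X] :=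
  ∑ j ∈ range (n + 1), descendantCoeff n j • X ^ (2 * j)

theorem descendantCoeff_self (n : ℕ) : descendantCoeff n n = 1 := by
  simp [descendantCoeff, (doubleFactorial_pos _).ne']

theorem descendantCoeff_succ_succ {n j : ℕ} (h : j < n) :
    descendantCoeff (n + 1) (j + 1) = descendantCoeff n j + 2 * descendantCoeff n (j + 1) := by
  obtain ⟨m, rfl⟩ := Nat.exists_eq_add_of_lt h
  simp only [descendantCoeff, doubleFactorial_two_mul_succ_sub_one,
    show j + m + 1 + 1 - (j + 1) = m + 1 by omega, show j + m + 1 - j = m + 1 by omega,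
    show j + m + 1 - (j + 1) = m by omega, factorial_succ]
  have := (doubleFactorial_pos (2 * j - 1)).ne'
  have := factorial_ne_zero m
  push_cast
  field_simp
  ring

theorem descendantCoeff_succ_zero (n : ℕ) :
    descendantCoeff (n + 1) 0 = 2 * descendantCoeff n 0 - descendantConst (n + 1) := by
  simp only [descendantCoeff, descendantConst, doubleFactorial_two_mul_succ_sub_one,
    show 2 * (n + 1) - 3 = 2 * n - 1 by omega, mul_zero, zero_tsub, doubleFactorial.eq_1,
    Nat.sub_zero, factorial_succ]
  have := factorial_ne_zero n
  push_cast
  field_simp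
  ring

theorem descendantPoly_zero : descendantPoly 0 = 1 := by simp [descendantPoly, descendantCoeff]

theorem descendantPoly_succ (n : ℕ) :
    descendantPoly (n + 1) = (X ^ 2 + 2) * descendantPoly n - C (descendantConst (n + 1)) := by
  have hX : X ^ 2 * descendantPoly n
      = ∑ j ∈ range n, descendantCoeff n j • X ^ (2 * (j + 1)) + X ^ (2 * (n + 1)) := by
    rw [descendantPoly, mul_sum, sum_range_succ, descendantCoeff_self, one_smul]
    simp only [mul_smul_comm, ← pow_add, mul_add, add_comm 2]
  have hlow : descendantPoly n
      = ∑ j ∈ range n, descendantCoeff n (j + 1) • X ^ (2 * (j + 1))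
        + C (descendantCoeff n 0) := by
    rw [descendantPoly, sum_range_succ', mul_zero, pow_zero, smul_eq_C_mul, mul_one]
  have hsucc : descendantPoly (n + 1)
      = ∑ j ∈ range n, descendantCoeff (n + 1) (j + 1) • X ^ (2 * (j + 1))
        + X ^ (2 * (n + 1)) + C (descendantCoeff (n + 1) 0) := by
    rw [descendantPoly, sum_range_succ', sum_range_succ, descendantCoeff_self, one_smul,
      mul_zero, pow_zero, smul_eq_C_mul, mul_one]
  have hterms : ∑ j ∈ range n, descendantCoeff (n + 1) (j + 1) • (X : ℚ[X]) ^ (2 * (j + 1))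
      = ∑ j ∈ range n, descendantCoeff n j • X ^ (2 * (j + 1))
        + 2 * ∑ j ∈ range n, descendantCoeff n (j + 1) • X ^ (2 * (j + 1)) := by
    rw [mul_sum, ← sum_add_distrib]
    refine sum_congr rfl fun j hj => ?_
    rw [descendantCoeff_succ_succ (mem_range.mp hj), add_smul, mul_smul, two_smul, ← two_mul]
  rw [hsucc, hterms, descendantCoeff_succ_zero, add_mul, hX, hlow, C_sub, C_mul, C_ofNat]
  ring

/-- Let `fₙ(x) = Σ_{j=0}^n ((2n-1)‼/((2j-1)‼(n-j)!)) x^{2j}` in `ℚ[x]`.  Then for all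
`k ≥ j ≥ 1` (with conventions `(-1)‼ = 1`, `(-3)‼ = -1`, so `(2l-3)‼` for `l ≥ 1` and
`(2(k+l)-3)‼` for `k+l ≥ 2` are given by the usual double factorials):
`fⱼ fₖ = f_{j+k} - Σ_{l=1}^j ((2l-3)‼/l!) f_{j+k-l} + Σ_{l=1}^j ((2(k+l)-3)‼/(k+l)!) f_{j-l}`. -/
theorem descendant_algebra_structure_constants :
    let f : ℕ → Polynomial ℚ := fun n =>
      ∑ j ∈ Finset.range (n + 1),
        (((2 * n - 1)‼ : ℚ) / (((2 * j - 1)‼ : ℚ) * ((n - j)! : ℚ))) • Polynomial.X ^ (2 * j)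
    ∀ j k : ℕ, 1 ≤ j → j ≤ k →
      f j * f k =
        f (j + k)
          - ∑ l ∈ Finset.Icc 1 j, (((2 * l - 3)‼ : ℚ) / (l ! : ℚ)) • f (j + k - l)
          + ∑ l ∈ Finset.Icc 1 j,
              (((2 * (k + l) - 3)‼ : ℚ) / ((k + l)! : ℚ)) • f (j - l) := by
  intro f j k _ _
  simp only [smul_eq_C_mul]
  exact mul_eq_of_succ_eq_mul_sub (c := fun l => C (descendantConst l))
    descendantPoly_zero descendantPoly_succ j k
end

section
/- The generating function identity Σ_{n≥0} t^n σ_n(φ_0) = e^{u_0 t}(1 + √(π x^2 t/2) · e^{x^2 t/2} · erf(√(x^2 t/2))) holds, where σ_n(φ_0) = Σ_{j=0}^n x^{2j} u_0^{n-j}/((2j-1)!!(n-j)!); equivalently, as formal power series, Σ_{n≥0} t^n σ_n(φ_0) = e^{u_0 t} · Σ_{j≥0} x^{2j} t^j/(2j-1)!!. -/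
open Polynomial PowerSeries Nat

theorem PowerSeries.mk_mul_mk_eq_mk_sum_range {R : Type*} [Semiring R] (f g : ℕ → R) :
    mk f * mk g = mk fun n => ∑ j ∈ Finset.range (n + 1), f (n - j) * g j := by
  ext n
  rw [coeff_mul, coeff_mk, ← Finset.Nat.sum_antidiagonal_swap,
    Finset.Nat.sum_antidiagonal_eq_sum_range_succ_mk]
  simp only [coeff_mk, Prod.fst_swap, Prod.snd_swap]

/-- Generating function identity
`Σ_{n≥0} tⁿ σₙ(φ₀) = e^{u₀t}(1 + √(πx²t/2)·e^{x²t/2}·erf(√(x²t/2)))`, equivalently, as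
formal power series in `t` with coefficients in `ℚ[x][u₀]`:
`Σ_{n≥0} tⁿ σₙ(φ₀) = e^{u₀t} · Σ_{j≥0} x^{2j} tʲ/(2j-1)‼`,
where `σₙ(φ₀) = Σ_{j=0}^n x^{2j} u₀^{n-j}/((2j-1)‼(n-j)!)`. -/
theorem descendant_generating_function :
    let A := Polynomial (Polynomial ℚ)
    let σ : ℕ → A := fun n =>
      ∑ j ∈ Finset.range (n + 1),
        ((1 : ℚ) / (((2 * j - 1)‼ : ℚ) * ((n - j)! : ℚ))) •
          (Polynomial.C (Polynomial.X ^ (2 * j)) * Polynomial.X ^ (n - j))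
    PowerSeries.mk σ =
      (PowerSeries.mk fun n => ((1 : ℚ) / (n ! : ℚ)) • (Polynomial.X : A) ^ n) *
        (PowerSeries.mk fun j =>
          ((1 : ℚ) / ((2 * j - 1)‼ : ℚ)) • (Polynomial.C (Polynomial.X ^ (2 * j)) : A)) := by
  intro A σ
  rw [mk_mul_mk_eq_mk_sum_range]
  refine congrArg mk (funext fun n => Finset.sum_congr rfl fun j _ => ?_)
  rw [smul_mul_smul_comm, one_div_mul_one_div_rev, mul_comm (Polynomial.X ^ (n - j) : A)]
end

section
/- For the connection ∇^λ_{∂/∂t_i} φ_k := ∂_{t_i} φ_k + λ φ_i · φ_k on fields φ_k in a commutative algebra, the flatness relation ∇^λ_{∂/∂t_i} ∇^λ_{∂/∂t_j} φ_k = ∇^λ_{∂/∂t_j} ∇^λ_{∂/∂t_i} φ_k holds for all i, j, k and all scalars λ. -/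
/-! The curvature of `∇ᵢ = Dᵢ + λ φᵢ` is `[∇ᵢ, ∇ⱼ] = [Dᵢ, Dⱼ] + λ (Dᵢ φⱼ - Dⱼ φᵢ)`: the Leibniz rule
makes the cross terms `λ (φⱼ Dᵢ + φᵢ Dⱼ)` and the quadratic term `λ² φᵢ φⱼ` symmetric in `i, j`.
Both remaining terms vanish, so `∇` is flat on all of `A`, in particular on the fields `φₖ`. -/

section TwistedConnection

variable {R A ι : Type*} [CommRing R] [CommRing A] [Algebra R A]
  (D : ι → Derivation R A A) (φ : ι → A) (lam : R)

def twistedConnection (i : ι) (a : A) : A :=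
  D i a + lam • (φ i * a)

theorem twistedConnection_twistedConnection (i j : ι) (a : A) :
    twistedConnection D φ lam i (twistedConnection D φ lam j a) =
      D i (D j a) + lam • (D i (φ j) * a) + lam • (φ j * D i a + φ i * D j a) +
        lam ^ 2 • (φ i * φ j * a) := by
  simp only [twistedConnection, map_add, Derivation.map_smul, Derivation.leibniz, smul_eq_mul]
  simp only [smul_add, mul_add, mul_smul_comm, smul_smul, pow_two, mul_comm a, ← mul_assoc]
  abel

variable {D φ}

theorem twistedConnection_comm (hcomm : ∀ i j a, D i (D j a) = D j (D i a))
    (hsym : ∀ i j, D i (φ j) = D j (φ i)) (i j : ι) (a : A) :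
    twistedConnection D φ lam i (twistedConnection D φ lam j a) =
      twistedConnection D φ lam j (twistedConnection D φ lam i a) := by
  rw [twistedConnection_twistedConnection, twistedConnection_twistedConnection, hcomm i j,
    hsym i j, add_comm (φ j * D i a), mul_comm (φ i) (φ j)]

end TwistedConnection

/-- For the connection `∇^λ_{∂/∂tᵢ} φₖ := ∂_{tᵢ} φₖ + λ φᵢ·φₖ` on fields `φₖ` in a
commutative algebra `A` (with commuting derivations `D i = ∂_{tᵢ}` and
`∂_{tᵢ} φⱼ = ∂_{tⱼ} φᵢ`, as holds for `φᵢ = ∂W/∂uᵢ`), the flatness relation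
`∇^λ_i ∇^λ_j φₖ = ∇^λ_j ∇^λ_i φₖ` holds for all `i, j, k` and all scalars `λ`. -/
theorem flat_connection_family (R : Type*) (A : Type*) [CommRing R] [CommRing A]
    [Algebra R A] (D : ℕ → Derivation R A A) (φ : ℕ → A)
    (hcomm : ∀ i j a, D i (D j a) = D j (D i a))
    (hsym : ∀ i j, D i (φ j) = D j (φ i)) (lam : R) :
    let nabla : ℕ → A → A := fun i a => D i a + lam • (φ i * a)
    ∀ i j k, nabla i (nabla j (φ k)) = nabla j (nabla i (φ k)) := by
  intro _ i j k
  exact twistedConnection_comm lam hcomm hsym i j (φ k)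
end

section
/- For normally ordered powers of the field x̂(z), the identity :x̂(z)^m: ⊙ :x̂(z)^n: = Σ_{j=0}^{min(m,n)} (j!/(4z²)^j) binom(m,j) binom(n,j) :x̂(z)^{m+n-2j}: implies x̂(z)^{⊙m} ⊙ x̂(z)^{⊙n} = x̂(z)^{⊙(m+n)} for all m, n ≥ 1; in particular the regularized product ⊙ is associative. -/
/-!
Write `F(a, b, j)` (`wickTerm`) for the coefficient of `c^(a+b+j) N(m+n-2(a+b+j))` produced by
the `a`-th term of `R m`, the `b`-th term of `R n` and the `j`-th term of the Wick identity.
Everything reduces to `Σ_{a+b+j=k} F(a, b, j) = T(m+n, k)`. After clearing factorials this is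
`C(m+n, m) = Σ_{a+b+j=k} k!/(a! b! j!) 2^j C(m+n-2k, m-2a-j)`, the coefficient of `X^m` in
`(X+1)^(m+n) = (X² + 1 + 2X)^k (X+1)^(m+n-2k)`.
(Combinatorially, `T(n, j)` counts the `j`-edge matchings of `n` points, and a matching of
`m + n` points splits into matchings inside the two blocks and `j` edges between them.)
-/

open Finset Nat Polynomial

/-- `T(n, j)`, extended by `0` for `2j > n`, where the factorial formula would not vanish. -/
def matchingCoeff (n j : ℕ) : ℚ :=
  if 2 * j ≤ n then (n ! : ℚ) / (2 ^ j * j ! * (n - 2 * j)!) else 0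

def wickTerm (m n a b j : ℕ) : ℚ :=
  matchingCoeff m a * matchingCoeff n b * (j ! * (m - 2 * a).choose j * (n - 2 * b).choose j)

lemma le_of_wickTerm_ne_zero {m n a b j : ℕ} (h : wickTerm m n a b j ≠ 0) :
    2 * a + j ≤ m ∧ 2 * b + j ≤ n := by
  unfold wickTerm matchingCoeff at h
  by_contra hle
  split_ifs at h <;> simp_all [Nat.choose_eq_zero_iff]
  omega

lemma wickTerm_eq {m n a b j k : ℕ} (hk : a + b + j = k) (hs : 2 * k ≤ m + n) :
    wickTerm m n a b j = (m ! * n ! : ℚ) / (2 ^ k * k ! * (m + n - 2 * k)!) *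
      (k.choose a * (k - a).choose b * 2 ^ j *
        (X ^ (2 * a + j) * (X + 1) ^ (m + n - 2 * k)).coeff m) := by
  rw [coeff_X_pow_mul', coeff_X_add_one_pow]
  by_cases hvalid : 2 * a + j ≤ m ∧ 2 * b + j ≤ n
  · obtain ⟨u, rfl⟩ := Nat.exists_eq_add_of_le hvalid.1
    obtain ⟨v, rfl⟩ := Nat.exists_eq_add_of_le hvalid.2
    subst hk
    have e1 : 2 * a + j + u - 2 * a = j + u := by omega
    have e2 : 2 * b + j + v - 2 * b = j + v := by omega
    have e3 : 2 * a + j + u + (2 * b + j + v) - 2 * (a + b + j) = u + v := by omega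
    have e4 : 2 * a + j + u - (2 * a + j) = u := by omega
    have e5 : a + b + j - a = b + j := by omega
    rw [if_pos hvalid.1, e3, e4, e5, wickTerm, matchingCoeff, matchingCoeff, if_pos (by omega),
      if_pos (by omega), e1, e2, show a + b + j = a + (b + j) by ring, Nat.cast_add_choose,
      Nat.cast_add_choose, Nat.cast_add_choose, Nat.add_comm j u, Nat.add_comm j v,
      Nat.cast_add_choose, Nat.cast_add_choose]
    field_simp
    ring
  · have hzero : wickTerm m n a b j = 0 := by_contra fun h => hvalid (le_of_wickTerm_ne_zero h)
    rw [hzero]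
    split_ifs with hm
    · rw [Nat.choose_eq_zero_of_lt (show m + n - 2 * k < m - (2 * a + j) by omega)]
      simp
    · simp

lemma cast_choose_eq_sum_coeff_trinomial {s k : ℕ} (m : ℕ) (hk : 2 * k ≤ s) :
    (s.choose m : ℚ) = ∑ a ∈ range (k + 1), ∑ b ∈ range (k - a + 1),
      k.choose a * (k - a).choose b * 2 ^ (k - a - b) *
        (X ^ (2 * a + (k - a - b)) * (X + 1) ^ (s - 2 * k) : ℚ[X]).coeff m := by
  have hpoly : (X + 1 : ℚ[X]) ^ s = ∑ a ∈ range (k + 1), ∑ b ∈ range (k - a + 1),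
      C (k.choose a * (k - a).choose b * 2 ^ (k - a - b) : ℚ) *
        (X ^ (2 * a + (k - a - b)) * (X + 1) ^ (s - 2 * k)) := by
    calc (X + 1 : ℚ[X]) ^ s = (X ^ 2 + (1 + 2 * X)) ^ k * (X + 1) ^ (s - 2 * k) := by
          rw [← pow_mul_pow_sub _ hk, pow_mul]; ring
      _ = _ := by
          rw [add_pow, sum_mul]
          refine sum_congr rfl fun a _ => ?_
          rw [add_pow, mul_sum, sum_mul, sum_mul]
          refine sum_congr rfl fun b _ => ?_
          simp only [map_mul, map_pow, map_natCast, map_ofNat]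
          ring
  simpa only [coeff_X_add_one_pow, finsetSum_coeff, coeff_C_mul] using
    congrArg (coeff · m) hpoly

lemma sum_wickTerm (m n k : ℕ) :
    ∑ a ∈ range (k + 1), ∑ b ∈ range (k - a + 1), wickTerm m n a b (k - a - b) =
      matchingCoeff (m + n) k := by
  by_cases hk : 2 * k ≤ m + n
  · calc _ = ∑ a ∈ range (k + 1), ∑ b ∈ range (k - a + 1),
            (m ! * n ! : ℚ) / (2 ^ k * k ! * (m + n - 2 * k)!) *
              (k.choose a * (k - a).choose b * 2 ^ (k - a - b) *
                (X ^ (2 * a + (k - a - b)) * (X + 1) ^ (m + n - 2 * k) : ℚ[X]).coeff m) := by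
          refine sum_congr rfl fun a ha => sum_congr rfl fun b hb => wickTerm_eq ?_ hk
          simp only [mem_range] at ha hb
          omega
      _ = (m ! * n ! : ℚ) / (2 ^ k * k ! * (m + n - 2 * k)!) * (m + n).choose m := by
          simp only [← mul_sum, ← cast_choose_eq_sum_coeff_trinomial m hk]
      _ = matchingCoeff (m + n) k := by
          rw [matchingCoeff, if_pos hk, Nat.cast_add_choose]
          field_simp
  · rw [matchingCoeff, if_neg hk]
    refine sum_eq_zero fun a ha => sum_eq_zero fun b hb => by_contra fun h => hk ?_
    have := le_of_wickTerm_ne_zero h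
    simp only [mem_range] at ha hb
    omega

lemma sum_range_sum_range_sum_range_eq_sum_antidiagonals {M : Type*} [AddCommMonoid M]
    (L : ℕ) (g : ℕ → ℕ → ℕ → M) (hg : ∀ a b j, L ≤ a + b + j → g a b j = 0) :
    ∑ a ∈ range L, ∑ b ∈ range L, ∑ j ∈ range L, g a b j =
      ∑ k ∈ range L, ∑ a ∈ range (k + 1), ∑ b ∈ range (k - a + 1), g a b (k - a - b) := by
  calc _ = ∑ a ∈ range L, ∑ b ∈ range (L - a), ∑ j ∈ range (L - a - b), g a b j := by
        refine sum_congr rfl fun a _ => ?_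
        refine (sum_subset (range_subset_range.2 (Nat.sub_le L a)) fun b _ hb => ?_).symm.trans
          (sum_congr rfl fun b _ => ?_)
        · refine sum_eq_zero fun j _ => hg a b j ?_
          simp only [mem_range] at hb
          omega
        · refine (sum_subset (range_subset_range.2 (by omega)) fun j _ hj => hg a b j ?_).symm
          simp only [mem_range] at hj
          omega
    _ = ∑ a ∈ range L, ∑ r ∈ range (L - a), ∑ b ∈ range (r + 1), g a b (r - b) :=
        sum_congr rfl fun a _ => (sum_range_diag_flip (L - a) (g a)).symm
    _ = _ := (sum_range_diag_flip L fun a r => ∑ b ∈ range (r + 1), g a b (r - b)).symm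

def IsWickProduct {A : Type*} [AddCommGroup A] [Module ℚ A] (odot : A →ₗ[ℚ] A →ₗ[ℚ] A) (c : ℚ)
    (N : ℕ → A) : Prop :=
  ∀ m n : ℕ, odot (N m) (N n) = ∑ j ∈ range (min m n + 1),
    (((j ! : ℚ) * c ^ j) * (m.choose j : ℚ) * (n.choose j : ℚ)) • N (m + n - 2 * j)

section

variable {A : Type*} [AddCommGroup A] [Module ℚ A] {odot : A →ₗ[ℚ] A →ₗ[ℚ] A} (c : ℚ)
  (N : ℕ → A)

def regularizedPow (p : ℕ) : A :=
  ∑ j ∈ range (p / 2 + 1), (matchingCoeff p j * c ^ j) • N (p - 2 * j)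

lemma regularizedPow_eq_sum_range {p L : ℕ} (hL : p / 2 < L) :
    regularizedPow c N p = ∑ j ∈ range L, (matchingCoeff p j * c ^ j) • N (p - 2 * j) := by
  refine sum_subset (range_subset_range.2 hL) fun j _ hj => ?_
  simp only [mem_range] at hj
  rw [matchingCoeff, if_neg (by omega), zero_mul, zero_smul]

variable {c N}

lemma odot_smul_smul_eq_sum_wickTerm (hWick : IsWickProduct odot c N)
    {m n L : ℕ} (a b : ℕ) (hL : (m + n) / 2 < L) :
    odot ((matchingCoeff m a * c ^ a) • N (m - 2 * a))
        ((matchingCoeff n b * c ^ b) • N (n - 2 * b)) =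
      ∑ j ∈ range L, (wickTerm m n a b j * c ^ (a + b + j)) • N (m + n - 2 * (a + b + j)) := by
  have hvanish : ∀ j, ¬(2 * a + j ≤ m ∧ 2 * b + j ≤ n) →
      (wickTerm m n a b j * c ^ (a + b + j)) • N (m + n - 2 * (a + b + j)) = 0 := fun j hj => by
    rw [show wickTerm m n a b j = 0 from by_contra fun h => hj (le_of_wickTerm_ne_zero h),
      zero_mul, zero_smul]
  by_cases hab : 2 * a ≤ m ∧ 2 * b ≤ n
  · simp only [map_smul, LinearMap.smul_apply, hWick (m - 2 * a) (n - 2 * b), smul_sum,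
      smul_smul]
    refine (sum_congr rfl fun j hj => ?_).trans
      (sum_subset (range_subset_range.2 (by omega)) fun j _ hj => hvanish j ?_)
    · simp only [mem_range] at hj
      rw [show m - 2 * a + (n - 2 * b) - 2 * j = m + n - 2 * (a + b + j) by omega, wickTerm,
        pow_add, pow_add]
      ring_nf
    · simp only [mem_range] at hj
      omega
  · rw [sum_eq_zero fun j _ => hvanish j (by omega)]
    have hzero : matchingCoeff m a = 0 ∨ matchingCoeff n b = 0 := by
      simp only [matchingCoeff, ite_eq_right_iff]
      omega
    rcases hzero with h | h <;> simp [h]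

lemma odot_regularizedPow (hWick : IsWickProduct odot c N)
    (m n : ℕ) :
    odot (regularizedPow c N m) (regularizedPow c N n) = regularizedPow c N (m + n) := by
  set L := (m + n) / 2 + 1
  set g : ℕ → ℕ → ℕ → A := fun a b j =>
    (wickTerm m n a b j * c ^ (a + b + j)) • N (m + n - 2 * (a + b + j))
  calc _ = ∑ a ∈ range L, ∑ b ∈ range L, ∑ j ∈ range L, g a b j := by
        rw [regularizedPow_eq_sum_range c N (L := L) (by omega),
          regularizedPow_eq_sum_range c N (L := L) (by omega)]
        simp only [map_sum, LinearMap.sum_apply]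
        rw [sum_comm]
        exact sum_congr rfl fun a _ => sum_congr rfl fun b _ =>
          odot_smul_smul_eq_sum_wickTerm hWick a b (Nat.lt_succ_self _)
    _ = ∑ k ∈ range L, ∑ a ∈ range (k + 1), ∑ b ∈ range (k - a + 1), g a b (k - a - b) := by
        refine sum_range_sum_range_sum_range_eq_sum_antidiagonals L g fun a b j hL => ?_
        simp only [g]
        rw [show wickTerm m n a b j = 0 from by_contra fun h => ?_, zero_mul, zero_smul]
        have := le_of_wickTerm_ne_zero h
        omega
    _ = ∑ k ∈ range L, (matchingCoeff (m + n) k * c ^ k) • N (m + n - 2 * k) := by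
        refine sum_congr rfl fun k _ => ?_
        rw [← sum_wickTerm, sum_mul, sum_smul]
        refine sum_congr rfl fun a ha => ?_
        rw [sum_mul, sum_smul]
        refine sum_congr rfl fun b hb => ?_
        simp only [mem_range] at ha hb
        simp only [g, show a + b + (k - a - b) = k by omega]

end

/-- Here `N n` is `:x̂(z)ⁿ:`, `c` is `(4z²)⁻¹`, `odot` is `⊙` and `R n` is `x̂(z)^{⊙n}`. -/
theorem regularized_product_homomorphism (A : Type*) [AddCommGroup A] [Module ℚ A]
    (odot : A →ₗ[ℚ] A →ₗ[ℚ] A) (c : ℚ) (N : ℕ → A)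
    (hWick : ∀ m n : ℕ, odot (N m) (N n) =
      ∑ j ∈ Finset.range (min m n + 1),
        (((j ! : ℚ) * c ^ j) * (Nat.choose m j : ℚ) * (Nat.choose n j : ℚ)) •
          N (m + n - 2 * j)) :
    let T : ℕ → ℕ → ℚ := fun n j => (n ! : ℚ) / ((2 : ℚ) ^ j * (j ! : ℚ) * ((n - 2 * j)! : ℚ))
    let R : ℕ → A := fun n =>
      ∑ j ∈ Finset.range (n / 2 + 1), (T n j * c ^ j) • N (n - 2 * j)
    (∀ m n : ℕ, 1 ≤ m → 1 ≤ n → odot (R m) (R n) = R (m + n)) ∧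
    (∀ l m n : ℕ, 1 ≤ l → 1 ≤ m → 1 ≤ n →
      odot (odot (R l) (R m)) (R n) = odot (R l) (odot (R m) (R n))) := by
  intro T R
  have hR : ∀ p, R p = regularizedPow c N p := fun p => sum_congr rfl fun j hj => by
    simp only [mem_range] at hj
    rw [matchingCoeff, if_pos (by omega)]
  simp only [hR, odot_regularizedPow hWick, add_assoc, implies_true, and_self]
end
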